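/- arXiv:2303.08413 — 15 statements merged into one kernel-verified Lean document; each statement's English description precedes it below -/
import Mathlib

section
/- Let R be a commutative ring and let A be a 2×2 matrix over R. Then A is extendable if and only if the image of A in M₂(R/(det A)) (the reduction of A modulo the principal ideal generated by det A) is simply extendable. In particular, if det A = 0, then A is extendable if and only if A is simply extendable. -/
/-- A 2×2 matrix over a commutative ring is *unimodular* if the ideal generated by
its entries is the whole ring, i.e. some linear combination of its entries is 1. -/
def MatUnimodular {R : Type*} [CommRing R] (A : Matrix (Fin 2) (Fin 2) R) : Prop :=
  ∃ p q r s : R, p * A 0 0 + q * A 0 1 + r * A 1 0 + s * A 1 1 = 1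

/-- A 2×2 matrix `A` is *extendable* if there is a 3×3 matrix of determinant 1 whose
upper-left 2×2 block is `A`. -/
def Extendable {R : Type*} [CommRing R] (A : Matrix (Fin 2) (Fin 2) R) : Prop :=
  ∃ B : Matrix (Fin 3) (Fin 3) R, B.det = 1 ∧
    ∀ i j : Fin 2, B i.castSucc j.castSucc = A i j

/-- A 2×2 matrix `A` is *simply extendable* if there is a 3×3 matrix of determinant 1
whose upper-left 2×2 block is `A` and whose (3,3) entry is 0. -/
def SimplyExtendable {R : Type*} [CommRing R] (A : Matrix (Fin 2) (Fin 2) R) : Prop :=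
  ∃ B : Matrix (Fin 3) (Fin 3) R, B.det = 1 ∧
    (∀ i j : Fin 2, B i.castSucc j.castSucc = A i j) ∧ B 2 2 = 0

/-- A 2×2 matrix is *non-full* if it is a product of a 2×1 matrix and a 1×2 matrix. -/
def NonFull {R : Type*} [CommRing R] (A : Matrix (Fin 2) (Fin 2) R) : Prop :=
  ∃ l m n q : R, A 0 0 = l * n ∧ A 0 1 = l * q ∧ A 1 0 = m * n ∧ A 1 1 = m * q

lemma extendable_char {R : Type*} [CommRing R] (A : Matrix (Fin 2) (Fin 2) R) :
    Extendable A ↔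
    ∃ x y z w t : R,
      t * A.det + (A 0 1 * y * z + A 1 0 * x * w - A 0 0 * y * w - A 1 1 * x * z) = 1 := by
  constructor
  · rintro ⟨B, hdet, hblk⟩
    have h00 : B 0 0 = A 0 0 := by simpa using hblk 0 0
    have h01 : B 0 1 = A 0 1 := by simpa using hblk 0 1
    have h10 : B 1 0 = A 1 0 := by simpa using hblk 1 0
    have h11 : B 1 1 = A 1 1 := by simpa using hblk 1 1
    refine ⟨B 0 2, B 1 2, B 2 0, B 2 1, B 2 2, ?_⟩
    rw [Matrix.det_fin_three, h00, h01, h10, h11] at hdet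
    rw [Matrix.det_fin_two]
    linear_combination hdet
  · rintro ⟨x, y, z, w, t, h⟩
    refine ⟨!![A 0 0, A 0 1, x; A 1 0, A 1 1, y; z, w, t], ?_, ?_⟩
    · rw [Matrix.det_fin_three]
      rw [Matrix.det_fin_two] at h
      simp
      linear_combination h
    · intro i j
      fin_cases i <;> fin_cases j <;> simp

lemma simplyExtendable_char {R : Type*} [CommRing R] (A : Matrix (Fin 2) (Fin 2) R) :
    SimplyExtendable A ↔
    ∃ x y z w : R,
      A 0 1 * y * z + A 1 0 * x * w - A 0 0 * y * w - A 1 1 * x * z = 1 := by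
  constructor
  · rintro ⟨B, hdet, hblk, hc⟩
    have h00 : B 0 0 = A 0 0 := by simpa using hblk 0 0
    have h01 : B 0 1 = A 0 1 := by simpa using hblk 0 1
    have h10 : B 1 0 = A 1 0 := by simpa using hblk 1 0
    have h11 : B 1 1 = A 1 1 := by simpa using hblk 1 1
    refine ⟨B 0 2, B 1 2, B 2 0, B 2 1, ?_⟩
    rw [Matrix.det_fin_three, h00, h01, h10, h11, hc] at hdet
    linear_combination hdet
  · rintro ⟨x, y, z, w, h⟩
    refine ⟨!![A 0 0, A 0 1, x; A 1 0, A 1 1, y; z, w, 0], ?_, ?_, by simp⟩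
    · rw [Matrix.det_fin_three]
      simp
      linear_combination h
    · intro i j
      fin_cases i <;> fin_cases j <;> simp

/-- A 2×2 matrix `A` over a commutative ring `R` is extendable iff its reduction
modulo the principal ideal `(det A)` is simply extendable; in particular, if
`det A = 0` then `A` is extendable iff it is simply extendable. -/
theorem extendable_iff_reduction_simplyExtendable {R : Type*} [CommRing R]
    (A : Matrix (Fin 2) (Fin 2) R) :
    (Extendable A ↔
      SimplyExtendable (A.map (⇑(Ideal.Quotient.mk (Ideal.span {A.det}))))) ∧
    (A.det = 0 → (Extendable A ↔ SimplyExtendable A)) := by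
  set Q := Ideal.Quotient.mk (Ideal.span {A.det}) with hQdef
  have hd : Q A.det = 0 := Ideal.Quotient.eq_zero_iff_mem.2 (Ideal.subset_span rfl)
  constructor
  · rw [extendable_char, simplyExtendable_char]
    constructor
    · rintro ⟨x, y, z, w, t, h⟩
      refine ⟨Q x, Q y, Q z, Q w, ?_⟩
      have h' := congrArg Q h
      simp only [map_add, map_sub, map_mul, map_one, hd, mul_zero] at h'
      simp only [Matrix.map_apply]
      linear_combination h'
    · rintro ⟨x', y', z', w', h⟩
      obtain ⟨x, rfl⟩ := Ideal.Quotient.mk_surjective x'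
      obtain ⟨y, rfl⟩ := Ideal.Quotient.mk_surjective y'
      obtain ⟨z, rfl⟩ := Ideal.Quotient.mk_surjective z'
      obtain ⟨w, rfl⟩ := Ideal.Quotient.mk_surjective w'
      have h' : Q (A 0 1 * y * z + A 1 0 * x * w - A 0 0 * y * w - A 1 1 * x * z) = Q 1 := by
        simp only [map_add, map_sub, map_mul, map_one, Matrix.map_apply] at h ⊢
        exact h
      have hdvd : A.det ∣ (A 0 1 * y * z + A 1 0 * x * w - A 0 0 * y * w - A 1 1 * x * z) - 1 := by
        rw [← Ideal.mem_span_singleton]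
        exact Ideal.Quotient.eq.mp h'
      obtain ⟨s, hs⟩ := hdvd
      exact ⟨x, y, z, w, -s, by linear_combination hs⟩
  · intro hd0
    rw [extendable_char, simplyExtendable_char]
    constructor
    · rintro ⟨x, y, z, w, t, h⟩
      rw [hd0] at h
      exact ⟨x, y, z, w, by linear_combination h⟩
    · rintro ⟨x, y, z, w, h⟩
      exact ⟨x, y, z, w, 0, by rw [hd0]; linear_combination h⟩
end

section
/- For a commutative ring R the following statements are equivalent: (1) every unimodular 2×2 matrix over R with determinant 0 is extendable; (2) every unimodular 2×2 matrix over R with determinant 0 is non-full; (3) for every unimodular 2×2 matrix A over R with determinant 0, the kernel of the R-linear map R² → R² given by A is isomorphic to R as an R-module. -/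
theorem ext_to_nonfull {R : Type*} [CommRing R] (A : Matrix (Fin 2) (Fin 2) R)
    (hd : A.det = 0) (h : Extendable A) : NonFull A := by
  obtain ⟨B, hB, hblk⟩ := h
  rw [Matrix.det_fin_two] at hd
  rw [Matrix.det_fin_three] at hB
  have e00 : B 0 0 = A 0 0 := hblk 0 0
  have e01 : B 0 1 = A 0 1 := hblk 0 1
  have e10 : B 1 0 = A 1 0 := hblk 1 0
  have e11 : B 1 1 = A 1 1 := hblk 1 1
  rw [e00, e01, e10, e11] at hB
  set a := A 0 0; set b := A 0 1; set c := A 1 0; set d := A 1 1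
  set u1 := B 0 2; set u2 := B 1 2
  set v1 := B 2 0; set v2 := B 2 1; set t := B 2 2
  set w1 := d * u1 - b * u2 with hw1
  set w2 := -(c * u1) + a * u2 with hw2
  have hw : v1 * w1 + v2 * w2 = -1 := by
    rw [hw1, hw2]; linear_combination t * hd - hB
  have hi : a * w1 + b * w2 = 0 := by rw [hw1, hw2]; linear_combination u1 * hd
  have hii : c * w1 + d * w2 = 0 := by rw [hw1, hw2]; linear_combination u2 * hd
  refine ⟨v1 * b - v2 * a, v1 * d - v2 * c, w2, -w1, ?_, ?_, ?_, ?_⟩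
  · linear_combination a * hw - v1 * hi
  · linear_combination b * hw - v2 * hi
  · linear_combination c * hw - v1 * hii
  · linear_combination d * hw - v2 * hii

theorem nonfull_to_ext {R : Type*} [CommRing R] (A : Matrix (Fin 2) (Fin 2) R)
    (hu : MatUnimodular A) (h : NonFull A) : Extendable A := by
  obtain ⟨l, m, n, q, ha, hb, hc, hd⟩ := h
  obtain ⟨p, p', r, s, hps⟩ := hu
  rw [ha, hb, hc, hd] at hps
  set α := p * n + p' * q with hα
  set β := r * n + s * q with hβ
  set γ := p * l + r * m with hγ
  set δ := p' * l + s * m with hδ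
  have h1 : α * l + β * m = 1 := by rw [hα, hβ]; linear_combination hps
  have h2 : γ * n + δ * q = 1 := by rw [hγ, hδ]; linear_combination hps
  refine ⟨!![l*n, l*q, β; m*n, m*q, -α; -δ, γ, 0], ?_, ?_⟩
  · rw [Matrix.det_fin_three]
    simp only [Matrix.of_apply, Matrix.cons_val', Matrix.cons_val_zero, Matrix.cons_val_one,
      Matrix.head_cons, Matrix.empty_val', Matrix.cons_val_fin_one, Matrix.cons_val_two,
      Matrix.tail_cons, Matrix.head_fin_const]
    ring_nf
    linear_combination (γ * n + δ * q) * h1 + h2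
  · intro i j
    fin_cases i <;> fin_cases j <;>
      simp [ha, hb, hc, hd]

theorem nonfull_to_ker {R : Type*} [CommRing R] (A : Matrix (Fin 2) (Fin 2) R)
    (hu : MatUnimodular A) (h : NonFull A) :
    Nonempty (LinearMap.ker (Matrix.toLin' A) ≃ₗ[R] R) := by
  obtain ⟨l, m, n, q, ha, hb, hc, hd⟩ := h
  obtain ⟨p, p', r, s, hps⟩ := hu
  rw [ha, hb, hc, hd] at hps
  set α := p * n + p' * q with hα
  set β := r * n + s * q with hβ
  set γ := p * l + r * m with hγ
  set δ := p' * l + s * m with hδ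
  have h1 : α * l + β * m = 1 := by rw [hα, hβ]; linear_combination hps
  have h2 : γ * n + δ * q = 1 := by rw [hγ, hδ]; linear_combination hps
  -- membership facts: v ∈ ker iff component equations
  have hker : ∀ v : Fin 2 → R, v ∈ LinearMap.ker (Matrix.toLin' A) ↔
      (A 0 0 * v 0 + A 0 1 * v 1 = 0 ∧ A 1 0 * v 0 + A 1 1 * v 1 = 0) := by
    intro v
    rw [LinearMap.mem_ker, Matrix.toLin'_apply]
    constructor
    · intro hz
      constructor
      · have := congrFun hz 0
        simpa [Matrix.mulVec, dotProduct, Fin.sum_univ_two] using this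
      · have := congrFun hz 1
        simpa [Matrix.mulVec, dotProduct, Fin.sum_univ_two] using this
    · rintro ⟨hz0, hz1⟩
      funext i
      fin_cases i <;>
        simpa [Matrix.mulVec, dotProduct, Fin.sum_univ_two] using (by assumption)
  -- elements of the kernel satisfy n v0 + q v1 = 0
  have hnq : ∀ v : Fin 2 → R, v ∈ LinearMap.ker (Matrix.toLin' A) → n * v 0 + q * v 1 = 0 := by
    intro v hv
    obtain ⟨hz0, hz1⟩ := (hker v).mp hv
    rw [ha, hb] at hz0; rw [hc, hd] at hz1
    linear_combination α * hz0 + β * hz1 - (n * v 0 + q * v 1) * h1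
  refine ⟨{ toFun := fun v => -δ * v.1 0 + γ * v.1 1,
            map_add' := ?_, map_smul' := ?_,
            invFun := fun t => ⟨![-(q * t), n * t], ?_⟩,
            left_inv := ?_, right_inv := ?_ }⟩
  · intro v w
    simp only [Submodule.coe_add, Pi.add_apply]
    ring
  · intro c v
    simp only [SetLike.val_smul, Pi.smul_apply, smul_eq_mul, RingHom.id_apply]
    ring
  · refine (hker _).mpr ⟨?_, ?_⟩ <;>
      simp [ha, hb, hc, hd] <;> ring
  · intro v
    have hv := hnq v.1 v.2
    apply Subtype.ext
    funext i
    fin_cases i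
    · show -(q * (-δ * v.1 0 + γ * v.1 1)) = v.1 0
      linear_combination (-γ) * hv + v.1 0 * h2
    · show n * (-δ * v.1 0 + γ * v.1 1) = v.1 1
      linear_combination (-δ) * hv + v.1 1 * h2
  · intro t
    show -δ * -(q * t) + γ * (n * t) = t
    linear_combination t * h2

theorem ker_to_nonfull {R : Type*} [CommRing R] (A : Matrix (Fin 2) (Fin 2) R)
    (hd : A.det = 0) (h : Nonempty (LinearMap.ker (Matrix.toLin' A) ≃ₗ[R] R)) :
    NonFull A := by
  obtain ⟨e⟩ := h
  rw [Matrix.det_fin_two] at hd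
  have hker : ∀ v : Fin 2 → R,
      (A 0 0 * v 0 + A 0 1 * v 1 = 0 ∧ A 1 0 * v 0 + A 1 1 * v 1 = 0) →
      v ∈ LinearMap.ker (Matrix.toLin' A) := by
    rintro v ⟨hz0, hz1⟩
    rw [LinearMap.mem_ker, Matrix.toLin'_apply]
    funext i
    fin_cases i <;>
      simpa [Matrix.mulVec, dotProduct, Fin.sum_univ_two] using (by assumption)
  have m1 : ![A 1 1, -(A 1 0)] ∈ LinearMap.ker (Matrix.toLin' A) := by
    refine hker _ ⟨?_, ?_⟩ <;> simp
    · linear_combination hd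
    · ring
  have m2 : ![-(A 0 1), A 0 0] ∈ LinearMap.ker (Matrix.toLin' A) := by
    refine hker _ ⟨?_, ?_⟩ <;> simp
    · ring
    · linear_combination hd
  set k1 : LinearMap.ker (Matrix.toLin' A) := ⟨_, m1⟩ with hk1
  set k2 : LinearMap.ker (Matrix.toLin' A) := ⟨_, m2⟩ with hk2
  set w := e.symm 1 with hw
  have key : ∀ k : LinearMap.ker (Matrix.toLin' A), k = (e k) • w := by
    intro k
    rw [hw, ← map_smul, smul_eq_mul, mul_one, e.symm_apply_apply]
  have hK1 := key k1
  have hK2 := key k2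
  have c10 : A 1 1 = e k1 * w.1 0 := by
    have := congrFun (congrArg Subtype.val hK1) 0
    simpa [hk1] using this
  have c11 : -(A 1 0) = e k1 * w.1 1 := by
    have := congrFun (congrArg Subtype.val hK1) 1
    simpa [hk1] using this
  have c20 : -(A 0 1) = e k2 * w.1 0 := by
    have := congrFun (congrArg Subtype.val hK2) 0
    simpa [hk2] using this
  have c21 : A 0 0 = e k2 * w.1 1 := by
    have := congrFun (congrArg Subtype.val hK2) 1
    simpa [hk2] using this
  exact ⟨e k2, -(e k1), w.1 1, -(w.1 0),
    by linear_combination c21, by linear_combination -c20,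
    by linear_combination -c11, by linear_combination c10⟩

/-- For a commutative ring `R`, the following are equivalent:
(1) every unimodular 2×2 matrix of determinant 0 is extendable;
(2) every unimodular 2×2 matrix of determinant 0 is non-full;
(3) for every unimodular 2×2 matrix `A` of determinant 0, the kernel of the linear
map `R² → R²` given by `A` is isomorphic to `R`. -/
theorem pi2_ring_characterization (R : Type*) [CommRing R] :
    ((∀ A : Matrix (Fin 2) (Fin 2) R, MatUnimodular A → A.det = 0 → Extendable A) ↔
      (∀ A : Matrix (Fin 2) (Fin 2) R, MatUnimodular A → A.det = 0 → NonFull A)) ∧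
    ((∀ A : Matrix (Fin 2) (Fin 2) R, MatUnimodular A → A.det = 0 → NonFull A) ↔
      (∀ A : Matrix (Fin 2) (Fin 2) R, MatUnimodular A → A.det = 0 →
        Nonempty (LinearMap.ker (Matrix.toLin' A) ≃ₗ[R] R))) := by
  refine ⟨⟨fun h A hu hd => ext_to_nonfull A hd (h A hu hd),
          fun h A hu hd => nonfull_to_ext A hu (h A hu hd)⟩,
         ⟨fun h A hu hd => nonfull_to_ker A hu (h A hu hd),
          fun h A hu hd => ker_to_nonfull A hd (h A hu hd)⟩⟩
end

section
/- Let R be a commutative ring. (i) If every unimodular 2×2 matrix over R is extendable (R is an E₂ ring), then R is a WZ₂ ring: for every unimodular A ∈ M₂(R) there exists B ∈ M₂(R) with det B = 0 and all entries of B − A in the ideal generated by det A. (ii) If every unimodular 2×2 matrix over R is simply extendable (R is an SE₂ ring), then R is a Z₂ ring: for every unimodular A ∈ M₂(R) there exists a unimodular B ∈ M₂(R) with det B = 0 and all entries of B − A in the ideal generated by det A. -/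
/-- (i) Each E₂ ring is a WZ₂ ring; (ii) each SE₂ ring is a Z₂ ring. -/
theorem e2_is_wz2_and_se2_is_z2 (R : Type*) [CommRing R] :
    ((∀ A : Matrix (Fin 2) (Fin 2) R, MatUnimodular A → Extendable A) →
      ∀ A : Matrix (Fin 2) (Fin 2) R, MatUnimodular A →
        ∃ B : Matrix (Fin 2) (Fin 2) R, B.det = 0 ∧
          ∀ i j : Fin 2, B i j - A i j ∈ Ideal.span {A.det}) ∧
    ((∀ A : Matrix (Fin 2) (Fin 2) R, MatUnimodular A → SimplyExtendable A) →
      ∀ A : Matrix (Fin 2) (Fin 2) R, MatUnimodular A →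
        ∃ B : Matrix (Fin 2) (Fin 2) R, MatUnimodular B ∧ B.det = 0 ∧
          ∀ i j : Fin 2, B i j - A i j ∈ Ideal.span {A.det}) := by
  constructor
  · intro hE A hU
    obtain ⟨M, hdet, hblk⟩ := hE A hU
    have h00 : M 0 0 = A 0 0 := by simpa using hblk 0 0
    have h01 : M 0 1 = A 0 1 := by simpa using hblk 0 1
    have h10 : M 1 0 = A 1 0 := by simpa using hblk 1 0
    have h11 : M 1 1 = A 1 1 := by simpa using hblk 1 1
    rw [Matrix.det_fin_three, h00, h01, h10, h11] at hdet
    have hD : A.det = A 0 0 * A 1 1 - A 0 1 * A 1 0 := Matrix.det_fin_two A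
    set D : R := A 0 0 * A 1 1 - A 0 1 * A 1 0 with hDdef
    refine ⟨!![(1 - M 2 2 * D) * A 0 0 + D * (M 0 2 * M 2 0),
               (1 - M 2 2 * D) * A 0 1 + D * (M 0 2 * M 2 1);
               (1 - M 2 2 * D) * A 1 0 + D * (M 1 2 * M 2 0),
               (1 - M 2 2 * D) * A 1 1 + D * (M 1 2 * M 2 1)], ?_, ?_⟩
    · rw [Matrix.det_fin_two_of, hDdef]
      linear_combination (-(A 0 0 * A 1 1 - A 0 1 * A 1 0) *
        (1 - M 2 2 * (A 0 0 * A 1 1 - A 0 1 * A 1 0))) * hdet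
    · intro i j
      rw [hD]
      fin_cases i <;> fin_cases j <;> simp only [Fin.mk_zero, Fin.mk_one] <;>
        refine Ideal.mem_span_singleton.mpr ?_
      · exact ⟨M 0 2 * M 2 0 - M 2 2 * A 0 0, by simp; ring⟩
      · exact ⟨M 0 2 * M 2 1 - M 2 2 * A 0 1, by simp; ring⟩
      · exact ⟨M 1 2 * M 2 0 - M 2 2 * A 1 0, by simp; ring⟩
      · exact ⟨M 1 2 * M 2 1 - M 2 2 * A 1 1, by simp; ring⟩
  · intro hE A hU
    obtain ⟨M, hdet, hblk, h33⟩ := hE A hU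
    have h00 : M 0 0 = A 0 0 := by simpa using hblk 0 0
    have h01 : M 0 1 = A 0 1 := by simpa using hblk 0 1
    have h10 : M 1 0 = A 1 0 := by simpa using hblk 1 0
    have h11 : M 1 1 = A 1 1 := by simpa using hblk 1 1
    rw [Matrix.det_fin_three, h00, h01, h10, h11] at hdet
    have hD : A.det = A 0 0 * A 1 1 - A 0 1 * A 1 0 := Matrix.det_fin_two A
    set D : R := A 0 0 * A 1 1 - A 0 1 * A 1 0 with hDdef
    refine ⟨!![A 0 0 + D * (M 0 2 * M 2 0), A 0 1 + D * (M 0 2 * M 2 1);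
               A 1 0 + D * (M 1 2 * M 2 0), A 1 1 + D * (M 1 2 * M 2 1)], ?_, ?_, ?_⟩
    · refine ⟨-(M 2 1 * M 1 2), M 2 0 * M 1 2, M 2 1 * M 0 2, -(M 2 0 * M 0 2), ?_⟩
      simp only [Matrix.cons_val_zero, Matrix.cons_val_one, Matrix.head_cons,
        Matrix.cons_val', Matrix.empty_val', Matrix.cons_val_fin_one, Matrix.head_fin_const,
        Matrix.of_apply]
      rw [hDdef]
      linear_combination hdet - (A 0 0 * A 1 1 - A 0 1 * A 1 0) * h33
    · rw [Matrix.det_fin_two_of, hDdef]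
      linear_combination ((A 0 0 * A 1 1 - A 0 1 * A 1 0)^2) * h33 -
        (A 0 0 * A 1 1 - A 0 1 * A 1 0) * hdet
    · intro i j
      rw [hD]
      fin_cases i <;> fin_cases j <;> simp only [Fin.mk_zero, Fin.mk_one] <;>
        refine Ideal.mem_span_singleton.mpr ?_
      · exact ⟨M 0 2 * M 2 0, by simp⟩
      · exact ⟨M 0 2 * M 2 1, by simp⟩
      · exact ⟨M 1 2 * M 2 0, by simp⟩
      · exact ⟨M 1 2 * M 2 1, by simp⟩
end

section
/- Let R be a commutative ring in which every upper triangular unimodular 2×2 matrix is simply extendable (an SE₂^△ ring). Then R is a V₂ ring: for every unimodular triple (a,b,c) ∈ R³ the equation (1 − a·x)·(1 − c·w) = y·(b + a·c·z) has a solution (x,y,z,w) ∈ R⁴ satisfying x·w = y·z. -/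
/-- If every upper triangular unimodular 2×2 matrix over `R` is simply extendable,
then `R` is a V₂ ring. -/
theorem se2_triangular_is_v2 (R : Type*) [CommRing R]
    (h : ∀ A : Matrix (Fin 2) (Fin 2) R, A 1 0 = 0 → MatUnimodular A →
      SimplyExtendable A) :
    ∀ a b c : R, (∃ x y z : R, a * x + b * y + c * z = 1) →
      ∃ x y z w : R, (1 - a * x) * (1 - c * w) = y * (b + a * c * z) ∧
        x * w = y * z := by
  rintro a b c ⟨x, y, z, hxyz⟩
  obtain ⟨B, hdet, hblk, h22⟩ := h !![a, b; 0, c] (by simp)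
    ⟨x, y, 0, z, by simp; linear_combination hxyz⟩
  have h00 : B 0 0 = a := hblk 0 0
  have h01 : B 0 1 = b := hblk 0 1
  have h10 : B 1 0 = 0 := hblk 1 0
  have h11 : B 1 1 = c := hblk 1 1
  rw [Matrix.det_fin_three, h00, h01, h10, h11, h22] at hdet
  exact ⟨-(B 1 2 * B 2 1), B 1 2 * B 2 0, B 0 2 * B 2 1, -(B 0 2 * B 2 0),
    by linear_combination -hdet, by ring⟩
end

section
/- Let R be a commutative ring such that for every a ∈ R the quotient ring R/(a) is a Π₂ ring, i.e., every unimodular 2×2 matrix over R/(a) with determinant 0 is extendable. Then R is an E₂ ring, i.e., every unimodular 2×2 matrix over R is extendable. -/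
/-- If `R/(a)` is a Π₂ ring for every `a ∈ R`, then `R` is an E₂ ring. -/
theorem e2_of_quotients_pi2 (R : Type*) [CommRing R]
    (h : ∀ a : R, ∀ A : Matrix (Fin 2) (Fin 2) (R ⧸ Ideal.span {a}),
      MatUnimodular A → A.det = 0 → Extendable A) :
    ∀ A : Matrix (Fin 2) (Fin 2) R, MatUnimodular A → Extendable A := by
  intro A hA
  obtain ⟨p, q, r, s, hpq⟩ := hA
  set d := A.det with hd
  set f := Ideal.Quotient.mk (Ideal.span {d}) with hf
  have hfd : f d = 0 := by
    rw [hf, Ideal.Quotient.eq_zero_iff_mem]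
    exact Ideal.mem_span_singleton_self d
  have huni : MatUnimodular (A.map f) := by
    refine ⟨f p, f q, f r, f s, ?_⟩
    simp only [Matrix.map_apply, ← map_mul, ← map_add]
    rw [hpq]; simp
  have hdet0 : (A.map f).det = 0 := by
    rw [show A.map ⇑f = f.mapMatrix A from rfl, ← RingHom.map_det, ← hd, hfd]
  obtain ⟨B, hB1, hB2⟩ := h d (A.map f) huni hdet0
  have heq : ∀ i j : Fin 2, B i.castSucc j.castSucc = f (A i j) := by
    intro i j; rw [hB2 i j]; rfl
  obtain ⟨b02, hb02⟩ := Ideal.Quotient.mk_surjective (B 0 2)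
  obtain ⟨b12, hb12⟩ := Ideal.Quotient.mk_surjective (B 1 2)
  obtain ⟨b20, hb20⟩ := Ideal.Quotient.mk_surjective (B 2 0)
  obtain ⟨b21, hb21⟩ := Ideal.Quotient.mk_surjective (B 2 1)
  obtain ⟨b22, hb22⟩ := Ideal.Quotient.mk_surjective (B 2 2)
  set B' : Matrix (Fin 3) (Fin 3) R :=
    !![A 0 0, A 0 1, b02; A 1 0, A 1 1, b12; b20, b21, b22] with hB'
  have hmap : B'.map f = B := by
    ext i j
    fin_cases i <;> fin_cases j <;>
      first
        | exact hb02 | exact hb12 | exact hb20 | exact hb21 | exact hb22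
        | exact (heq 0 0).symm | exact (heq 0 1).symm
        | exact (heq 1 0).symm | exact (heq 1 1).symm
  have hdetB' : f B'.det = 1 := by
    rw [RingHom.map_det, show f.mapMatrix B' = B'.map ⇑f from rfl, hmap, hB1]
  have hmem : B'.det - 1 ∈ Ideal.span {d} := by
    rw [← Ideal.Quotient.eq_zero_iff_mem]
    rw [show Ideal.Quotient.mk (Ideal.span {d}) (B'.det - 1) = f (B'.det - 1) from rfl]
    rw [map_sub, hdetB']
    simp
  obtain ⟨t, ht⟩ := Ideal.mem_span_singleton'.mp hmem
  -- ht : t * d = B'.det - 1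
  refine ⟨!![A 0 0, A 0 1, b02; A 1 0, A 1 1, b12; b20, b21, b22 - t], ?_, ?_⟩
  · have hdB' : B'.det = A 0 0 * (A 1 1 * b22 - b12 * b21)
        - A 0 1 * (A 1 0 * b22 - b12 * b20) + b02 * (A 1 0 * b21 - A 1 1 * b20) := by
      rw [hB', Matrix.det_fin_three]
      ring_nf
      rfl
    have hdA : d = A 0 0 * A 1 1 - A 0 1 * A 1 0 := by
      rw [hd, Matrix.det_fin_two]
    rw [Matrix.det_fin_three]
    show A 0 0 * A 1 1 * (b22 - t) - A 0 0 * b12 * b21 - A 0 1 * A 1 0 * (b22 - t)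
        + A 0 1 * b12 * b20 + b02 * A 1 0 * b21 - b02 * A 1 1 * b20 = 1
    have ht' := ht
    rw [hdA, hdB'] at ht'
    linear_combination -ht'
  · intro i j
    fin_cases i <;> fin_cases j <;> rfl
end

section
/- Let R be an integral domain of Krull dimension at most 1. Then every unimodular 2×2 matrix over R with nonzero determinant is simply extendable. -/
/-!
Modulo `δ = det A` the ring `R ⧸ (δ)` is zero-dimensional, hence strongly π-regular: every `x`
satisfies `x ^ n = x ^ (n + 1) * t` for some `n` and `t`. Writing `1 = x + y` with `x` in the
ideal of the first column of `A` and `y` in that of the second, `e = (x * t) ^ (n + 1)` is an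
idempotent modulo `δ` with `e ∈ (x)` and `1 - e ∈ (y)`, which makes the column `A *ᵥ ![e, 1 - e]`
unimodular modulo `δ`. Since `δ` lies in the ideal generated by that column, it is unimodular in
`R`, and a unimodular column `A *ᵥ ![p, q]` yields the extension with last row `(-q, p, 0)`.
-/

open Matrix

theorem simplyExtendable_of_mulVec_unimodular {R : Type*} [CommRing R]
    (A : Matrix (Fin 2) (Fin 2) R) (p q u v : R)
    (h : u * (A *ᵥ ![p, q]) 0 + v * (A *ᵥ ![p, q]) 1 = 1) : SimplyExtendable A := by
  refine ⟨!![A 0 0, A 0 1, v; A 1 0, A 1 1, -u; -q, p, 0], ?_, ?_, rfl⟩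
  · simp only [mulVec, dotProduct, Fin.sum_univ_two, cons_val_zero, cons_val_one] at h
    simp only [det_fin_three, of_apply, cons_val', cons_val_zero, cons_val_one, cons_val_fin_one,
      cons_val]
    linear_combination h
  · intro i j
    fin_cases i <;> fin_cases j <;> rfl

theorem simplyExtendable_of_mulVec_unimodular_mod_det {R : Type*} [CommRing R]
    (A : Matrix (Fin 2) (Fin 2) R) (e u v : R)
    (h : u * (A *ᵥ ![e, 1 - e]) 0 + v * (A *ᵥ ![e, 1 - e]) 1 - 1 ∈ Ideal.span {A.det}) :
    SimplyExtendable A := by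
  -- Sum the two entries of `adj A *ᵥ (A *ᵥ ![e, 1 - e]) = det A • ![e, 1 - e]`.
  have hdet : A.det = (A 1 1 - A 1 0) * (A *ᵥ ![e, 1 - e]) 0 +
      (A 0 0 - A 0 1) * (A *ᵥ ![e, 1 - e]) 1 := by
    simp only [det_fin_two, mulVec, dotProduct, Fin.sum_univ_two, cons_val_zero, cons_val_one]
    ring
  obtain ⟨z, hz⟩ := Ideal.mem_span_singleton'.mp h
  refine simplyExtendable_of_mulVec_unimodular A e (1 - e) (u - z * (A 1 1 - A 1 0))
    (v - z * (A 0 0 - A 0 1)) ?_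
  linear_combination z * hdet - hz

theorem exists_mulVec_unimodular_of_isIdempotentElem {R : Type*} [CommRing R]
    (A : Matrix (Fin 2) (Fin 2) R) {e : R} (he : IsIdempotentElem e)
    (h₀ : e ∈ Ideal.span {A 0 0, A 1 0}) (h₁ : 1 - e ∈ Ideal.span {A 0 1, A 1 1}) :
    ∃ u v, u * (A *ᵥ ![e, 1 - e]) 0 + v * (A *ᵥ ![e, 1 - e]) 1 = 1 := by
  obtain ⟨r, s, hrs⟩ := Ideal.mem_span_pair.mp h₀
  obtain ⟨r', s', hrs'⟩ := Ideal.mem_span_pair.mp h₁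
  refine ⟨r * e + r' * (1 - e), s * e + s' * (1 - e), ?_⟩
  simp only [mulVec, dotProduct, Fin.sum_univ_two, cons_val_zero, cons_val_one]
  linear_combination e * hrs + (1 - e) * hrs' +
    ((r - r') * (A 0 0 - A 0 1) + (s - s') * (A 1 0 - A 1 1) + 2) * he.eq

theorem MatUnimodular.map {R S : Type*} [CommRing R] [CommRing S]
    {A : Matrix (Fin 2) (Fin 2) R} (hA : MatUnimodular A) (f : R →+* S) :
    MatUnimodular (A.map f) := by
  obtain ⟨p, q, r, s, h⟩ := hA
  exact ⟨f p, f q, f r, f s, by simpa using congrArg f h⟩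

theorem Ring.krullDimLE_zero_quotient_of_ringKrullDim_le_one {R : Type*} [CommRing R]
    (hdim : ringKrullDim R ≤ 1) {r : R} (hr : r ∈ nonZeroDivisors R) :
    Ring.KrullDimLE 0 (R ⧸ Ideal.span {r}) := by
  rw [Ring.krullDimLE_iff]
  exact ENat.WithBot.add_le_add_natCast_right_iff.mp
    ((ringKrullDim_quotient_succ_le_of_nonZeroDivisor hr).trans hdim)

theorem Ring.KrullDimLE.exists_pow_eq_pow_succ_mul {S : Type*} [CommRing S]
    [Ring.KrullDimLE 0 S] (x : S) : ∃ (n : ℕ) (t : S), x ^ n = x ^ (n + 1) * t := by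
  by_contra! h
  -- A prime avoiding `T` is maximal and misses `x`, so it contains some `1 - a * x ∈ T`.
  let T : Submonoid S :=
    { carrier := {r | ∃ (n : ℕ) (a : S), x ^ n * (1 - a * x) = r}
      one_mem' := ⟨0, 0, by ring⟩
      mul_mem' := by
        rintro _ _ ⟨n, a, rfl⟩ ⟨n', a', rfl⟩
        exact ⟨n + n', a + a' - a * a' * x, by ring⟩ }
  have hT : Disjoint ((⊥ : Ideal S) : Set S) T := by
    refine Set.disjoint_left.mpr ?_
    rintro _ h0 ⟨n, a, rfl⟩
    exact h n a (by linear_combination Ideal.mem_bot.mp h0)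
  obtain ⟨p, hp, -, hpT⟩ := Ideal.exists_le_prime_disjoint ⊥ T hT
  have hx : x ∉ p := fun hx ↦ Set.disjoint_left.mp hpT hx ⟨1, 0, by ring⟩
  obtain ⟨a, i, hi, hai⟩ := hp.isMaximal'.exists_inv hx
  exact Set.disjoint_left.mp hpT hi ⟨0, a, by linear_combination -hai⟩

theorem Ring.KrullDimLE.exists_isIdempotentElem_mem_of_sup_eq_top {S : Type*} [CommRing S]
    [Ring.KrullDimLE 0 S] {I J : Ideal S} (h : I ⊔ J = ⊤) :
    ∃ e, IsIdempotentElem e ∧ e ∈ I ∧ 1 - e ∈ J := by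
  obtain ⟨x, hx, y, hy, hxy⟩ := Submodule.mem_sup.mp (h ▸ Submodule.mem_top : (1 : S) ∈ I ⊔ J)
  obtain ⟨n, t, hn⟩ := exists_pow_eq_pow_succ_mul x
  have hpow (k : ℕ) : x ^ (n + 1) = x ^ (n + 1) * (x * t) ^ k := by
    induction k with
    | zero => ring
    | succ k ih => linear_combination ih + x * (x * t) ^ k * hn
  obtain ⟨c, hc⟩ := one_sub_dvd_one_sub_pow x (n + 1)
  set e := (x * t) ^ (n + 1)
  refine ⟨e, ?_, I.pow_mem_of_mem (I.mul_mem_right t hx) _ n.succ_pos, ?_⟩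
  · show e * e = e
    linear_combination (-t ^ (n + 1)) * hpow (n + 1)
  · have : 1 - e = y * (c * (1 - e)) := by
      linear_combination hpow (n + 1) + (1 - e) * hc - (1 - e) * c * hxy
    exact this ▸ J.mul_mem_right _ hy

theorem MatUnimodular.exists_mulVec_unimodular {S : Type*} [CommRing S] [Ring.KrullDimLE 0 S]
    {A : Matrix (Fin 2) (Fin 2) S} (hA : MatUnimodular A) :
    ∃ e u v, u * (A *ᵥ ![e, 1 - e]) 0 + v * (A *ᵥ ![e, 1 - e]) 1 = 1 := by
  have hcols : Ideal.span {A 0 0, A 1 0} ⊔ Ideal.span {A 0 1, A 1 1} = ⊤ := by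
    obtain ⟨p, q, r, s, h⟩ := hA
    rw [Ideal.eq_top_iff_one, ← h, add_right_comm _ (q * _), add_assoc]
    exact Submodule.add_mem_sup (Ideal.mem_span_pair.mpr ⟨p, r, rfl⟩)
      (Ideal.mem_span_pair.mpr ⟨q, s, rfl⟩)
  obtain ⟨e, he, h₀, h₁⟩ := Ring.KrullDimLE.exists_isIdempotentElem_mem_of_sup_eq_top hcols
  exact ⟨e, exists_mulVec_unimodular_of_isIdempotentElem A he h₀ h₁⟩

/-- Over an integral domain of Krull dimension at most 1, every unimodular 2×2
matrix with nonzero determinant is simply extendable. -/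
theorem simplyExtendable_of_dim_le_one {R : Type*} [CommRing R] [IsDomain R]
    (hdim : ringKrullDim R ≤ 1) (A : Matrix (Fin 2) (Fin 2) R)
    (hA : MatUnimodular A) (hdet : A.det ≠ 0) : SimplyExtendable A := by
  have : Ring.KrullDimLE 0 (R ⧸ Ideal.span {A.det}) :=
    Ring.krullDimLE_zero_quotient_of_ringKrullDim_le_one hdim
      (mem_nonZeroDivisors_of_ne_zero hdet)
  obtain ⟨e', u', v', h⟩ :=
    (hA.map (Ideal.Quotient.mk (Ideal.span {A.det}))).exists_mulVec_unimodular
  obtain ⟨e, rfl⟩ := Ideal.Quotient.mk_surjective e'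
  obtain ⟨u, rfl⟩ := Ideal.Quotient.mk_surjective u'
  obtain ⟨v, rfl⟩ := Ideal.Quotient.mk_surjective v'
  refine simplyExtendable_of_mulVec_unimodular_mod_det A e u v ?_
  rw [← Ideal.Quotient.eq_zero_iff_mem]
  simpa [mulVec, dotProduct, sub_eq_zero] using h
end

section
/- Let R be a Hermite ring. Then R is an elementary divisor ring if and only if every unimodular 2×2 matrix over R is simply extendable. -/
/-- `R` is a *Hermite ring* (in the sense of Kaplansky) if every pair `(a, b)` can be
written as `a = r*s`, `b = r*t` with `(s, t)` unimodular. -/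
def IsHermiteRing (R : Type*) [CommRing R] : Prop :=
  ∀ a b : R, ∃ r s t : R, a = r * s ∧ b = r * t ∧ ∃ x y : R, s * x + t * y = 1

/-- `R` is an *elementary divisor ring* if every 2×2 matrix over `R` admits diagonal
reduction `M * A * N = diag(d₁, d₂)` with `M`, `N` invertible and `d₁ ∣ d₂`. -/
def IsEDR (R : Type*) [CommRing R] : Prop :=
  ∀ A : Matrix (Fin 2) (Fin 2) R, ∃ M N : Matrix (Fin 2) (Fin 2) R,
    IsUnit M.det ∧ IsUnit N.det ∧ ∃ d₁ d₂ : R, d₁ ∣ d₂ ∧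
      M * A * N = Matrix.of ![![d₁, 0], ![0, d₂]]

/-- If a 2×2 matrix is simply extendable then it is equivalent (via matrices of
determinant 1) to a diagonal matrix `diag(1, δ)`. -/
lemma se_diag {R : Type*} [CommRing R] (T : Matrix (Fin 2) (Fin 2) R)
    (h : ∃ B : Matrix (Fin 3) (Fin 3) R, B.det = 1 ∧
      (∀ i j : Fin 2, B i.castSucc j.castSucc = T i j) ∧ B 2 2 = 0) :
    ∃ M N : Matrix (Fin 2) (Fin 2) R, M.det = 1 ∧ N.det = 1 ∧
      ∃ δ : R, M * T * N = !![1, 0; 0, δ] := by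
  obtain ⟨B, hdet, hblk, h22⟩ := h
  have hB00 := hblk 0 0; have hB01 := hblk 0 1
  have hB10 := hblk 1 0; have hB11 := hblk 1 1
  simp only [Fin.castSucc_zero, Fin.castSucc_one] at hB00 hB01 hB10 hB11
  rw [Matrix.det_fin_three, hB00, hB01, hB10, hB11, h22] at hdet
  obtain ⟨p₁, p₂, q₁, q₂, key⟩ :
      ∃ p₁ p₂ q₁ q₂ : R,
        p₁ * (T 0 0 * q₁ + T 0 1 * q₂) + p₂ * (T 1 0 * q₁ + T 1 1 * q₂) = 1 :=
    ⟨B 1 2, -(B 0 2), -(B 2 1), B 2 0, by linear_combination hdet⟩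
  clear hdet hB00 hB01 hB10 hB11 h22 hblk
  obtain ⟨P, Q, hP, hQ, hG00⟩ :
      ∃ P Q : Matrix (Fin 2) (Fin 2) R, P.det = 1 ∧ Q.det = 1 ∧ (P * T * Q) 0 0 = 1 := by
    refine ⟨!![p₁, p₂; -(T 1 0 * q₁ + T 1 1 * q₂), T 0 0 * q₁ + T 0 1 * q₂],
      !![q₁, -(p₁ * T 0 1 + p₂ * T 1 1); q₂, p₁ * T 0 0 + p₂ * T 1 0], ?_, ?_, ?_⟩
    · rw [Matrix.det_fin_two_of]; linear_combination key
    · rw [Matrix.det_fin_two_of]; linear_combination key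
    · simp only [Matrix.mul_apply, Fin.sum_univ_two, Matrix.of_apply, Matrix.cons_val',
        Matrix.cons_val_zero, Matrix.cons_val_one, Matrix.head_cons, Matrix.head_fin_const,
        Matrix.empty_val', Matrix.cons_val_fin_one]
      linear_combination key
  set G := P * T * Q with hG
  refine ⟨!![1, 0; -(G 1 0), 1] * P, Q * !![1, -(G 0 1); 0, 1], ?_, ?_,
    G 1 1 - G 1 0 * G 0 1, ?_⟩
  · rw [Matrix.det_mul, hP, Matrix.det_fin_two_of]; ring
  · rw [Matrix.det_mul, hQ, Matrix.det_fin_two_of]; ring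
  · have hassoc : !![1, 0; -(G 1 0), 1] * P * T * (Q * !![1, -(G 0 1); 0, 1]) =
        !![1, 0; -(G 1 0), 1] * G * !![1, -(G 0 1); 0, 1] := by
      rw [hG]; noncomm_ring
    rw [hassoc]
    ext i j
    fin_cases i <;> fin_cases j <;>
      simp only [Matrix.mul_apply, Fin.sum_univ_two, Matrix.of_apply, Matrix.cons_val',
        Matrix.cons_val_zero, Matrix.cons_val_one, Matrix.head_cons, Matrix.head_fin_const,
        Matrix.empty_val', Matrix.cons_val_fin_one, Fin.isValue, Fin.zero_eta, Fin.mk_one]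
    · linear_combination hG00
    · linear_combination (-(G 0 1)) * hG00
    · linear_combination (-(G 1 0)) * hG00
    · linear_combination (G 1 0 * G 0 1) * hG00

/-- Over a Hermite ring, every 2×2 matrix can be brought by right multiplication with
a determinant-1 matrix to a scalar multiple of a unimodular (triangular) matrix. -/
lemma hermite_reduce {R : Type*} [CommRing R] (hR : IsHermiteRing R)
    (A : Matrix (Fin 2) (Fin 2) R) :
    ∃ N₀ : Matrix (Fin 2) (Fin 2) R, N₀.det = 1 ∧
      ∃ g : R, ∃ T : Matrix (Fin 2) (Fin 2) R, MatUnimodular T ∧ A * N₀ = g • T := by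
  obtain ⟨r, s, t, hs, ht, x, y, hxy⟩ := hR (A 0 0) (A 0 1)
  obtain ⟨e, s₂, t₂, h1, h2, x₂, y₂, hxy₂⟩ := hR r (A 1 0 * x + A 1 1 * y)
  obtain ⟨g, u, v, h3, h4, x₃, y₃, hxy₃⟩ := hR e (A 1 0 * (-t) + A 1 1 * s)
  refine ⟨!![x, -t; y, s], by rw [Matrix.det_fin_two_of]; linear_combination hxy,
    g, !![u * s₂, 0; u * t₂, v], ?_, ?_⟩
  · refine ⟨x₂ * x₃, 0, y₂ * x₃, y₃, ?_⟩
    simp only [Matrix.of_apply, Matrix.cons_val', Matrix.cons_val_zero, Matrix.cons_val_one,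
      Matrix.head_cons, Matrix.head_fin_const, Matrix.empty_val', Matrix.cons_val_fin_one]
    linear_combination (u * x₃) * hxy₂ + hxy₃
  · ext i j
    fin_cases i <;> fin_cases j <;>
      simp only [Matrix.mul_apply, Fin.sum_univ_two, Matrix.smul_apply, smul_eq_mul,
        Matrix.of_apply, Matrix.cons_val', Matrix.cons_val_zero, Matrix.cons_val_one,
        Matrix.head_cons, Matrix.head_fin_const, Matrix.empty_val', Matrix.cons_val_fin_one,
        Fin.isValue, Fin.zero_eta, Fin.mk_one]
    · linear_combination x * hs + y * ht + r * hxy + h1 + s₂ * h3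
    · linear_combination (-t) * hs + s * ht
    · linear_combination h2 + t₂ * h3
    · linear_combination h4

/-- The forward direction: a matrix admitting a diagonal reduction `diag(d₁, d₁*c)`
which is unimodular is simply extendable. -/
lemma edr_forward {R : Type*} [CommRing R]
    (M N A : Matrix (Fin 2) (Fin 2) R) (hM : IsUnit M.det) (hN : IsUnit N.det)
    (d₁ c : R) (hMAN : M * A * N = Matrix.of ![![d₁, 0], ![0, d₁ * c]])
    (hA : ∃ p q r s : R, p * A 0 0 + q * A 0 1 + r * A 1 0 + s * A 1 1 = 1) :
    ∃ B : Matrix (Fin 3) (Fin 3) R, B.det = 1 ∧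
      (∀ i j : Fin 2, B i.castSucc j.castSucc = A i j) ∧ B 2 2 = 0 := by
  letI := M.invertibleOfIsUnitDet hM
  letI := N.invertibleOfIsUnitDet hN
  have hAeq : A = ⅟M * Matrix.of ![![d₁, 0], ![0, d₁ * c]] * ⅟N := by
    have h : ⅟M * (M * A * N) * ⅟N = A := by
      calc ⅟M * (M * A * N) * ⅟N = (⅟M * M) * A * (N * ⅟N) := by noncomm_ring
        _ = A := by rw [invOf_mul_self, mul_invOf_self, Matrix.one_mul, Matrix.mul_one]
    rw [hMAN] at h
    exact h.symm
  have hent : ∀ i j : Fin 2, A i j =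
      d₁ * (⅟M i 0 * ⅟N 0 j) + (d₁ * c) * (⅟M i 1 * ⅟N 1 j) := by
    intro i j
    conv_lhs => rw [hAeq]
    simp only [Matrix.mul_apply, Fin.sum_univ_two, Matrix.of_apply, Matrix.cons_val',
      Matrix.cons_val_zero, Matrix.cons_val_one, Matrix.head_cons, Matrix.head_fin_const,
      Matrix.empty_val', Matrix.cons_val_fin_one]
    ring
  obtain ⟨p, q, r, s, hu⟩ := hA
  rw [hent 0 0, hent 0 1, hent 1 0, hent 1 1] at hu
  -- extract the unit relation for d₁
  obtain ⟨w, hw⟩ : ∃ w : R, d₁ * w = 1 := by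
    refine ⟨p * (⅟M 0 0 * ⅟N 0 0) + q * (⅟M 0 0 * ⅟N 0 1) + r * (⅟M 1 0 * ⅟N 0 0) +
      s * (⅟M 1 0 * ⅟N 0 1) + c * (p * (⅟M 0 1 * ⅟N 1 0) + q * (⅟M 0 1 * ⅟N 1 1) +
      r * (⅟M 1 1 * ⅟N 1 0) + s * (⅟M 1 1 * ⅟N 1 1)), ?_⟩
    linear_combination hu
  have hdM : (⅟M).det * M.det = 1 := by
    rw [← Matrix.det_mul, invOf_mul_self, Matrix.det_one]
  have hdN : (⅟N).det * N.det = 1 := by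
    rw [← Matrix.det_mul, invOf_mul_self, Matrix.det_one]
  rw [Matrix.det_fin_two] at hdM hdN
  refine ⟨!![A 0 0, A 0 1, (M.det * N.det) * ⅟M 0 1;
             A 1 0, A 1 1, (M.det * N.det) * ⅟M 1 1;
             -w * ⅟N 1 0, -w * ⅟N 1 1, 0], ?_, ?_, ?_⟩
  · rw [Matrix.det_fin_three]
    simp only [Matrix.of_apply, Matrix.cons_val', Matrix.cons_val_zero, Matrix.cons_val_one,
      Matrix.head_cons, Matrix.head_fin_const, Matrix.empty_val', Matrix.cons_val_fin_one,
      Matrix.cons_val_two, Matrix.tail_cons]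
    rw [hent 0 0, hent 0 1, hent 1 0, hent 1 1]
    linear_combination ((⅟N 0 0 * ⅟N 1 1 - ⅟N 0 1 * ⅟N 1 0) * N.det * (d₁ * w)) * hdM +
      (d₁ * w) * hdN + hw
  · intro i j
    fin_cases i <;> fin_cases j <;> simp
  · simp

/-- A Hermite ring is an elementary divisor ring iff every unimodular 2×2 matrix
over it is simply extendable. -/
theorem hermite_edr_iff_se2 (R : Type*) [CommRing R] (hR : IsHermiteRing R) :
    IsEDR R ↔ ∀ A : Matrix (Fin 2) (Fin 2) R, MatUnimodular A → SimplyExtendable A := by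
  constructor
  · intro hedr A hA
    obtain ⟨M, N, hM, hN, d₁, d₂, ⟨c, hc⟩, hMAN⟩ := hedr A
    rw [hc] at hMAN
    exact edr_forward M N A hM hN d₁ c hMAN hA
  · intro hyp A
    obtain ⟨N₀, hN₀, g, T, hTuni, hprod⟩ := hermite_reduce hR A
    obtain ⟨M₁, N₁, hM₁, hN₁, δ, hfin⟩ := se_diag T (hyp T hTuni)
    refine ⟨M₁, N₀ * N₁, by rw [hM₁]; exact isUnit_one,
      by rw [Matrix.det_mul, hN₀, hN₁, one_mul]; exact isUnit_one,
      g, g * δ, ⟨δ, rfl⟩, ?_⟩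
    have hkey : M₁ * A * (N₀ * N₁) = g • (M₁ * T * N₁) := by
      calc M₁ * A * (N₀ * N₁) = M₁ * (A * N₀) * N₁ := by noncomm_ring
        _ = M₁ * (g • T) * N₁ := by rw [hprod]
        _ = g • (M₁ * T * N₁) := by rw [Matrix.mul_smul, Matrix.smul_mul]
    rw [hkey, hfin]
    ext i j
    fin_cases i <;> fin_cases j <;>
      simp [Matrix.smul_apply]
end

section
/- Let R be a Hermite ring. Then R is an elementary divisor ring if and only if R is a U₂ ring, i.e., for every unimodular pair (a,b) ∈ R² and every c ∈ R, the map U(R/(a·c)) × U(R/(b·c)) → U(R/(c)) sending a pair of units (u,v) to the product of their images under the natural reduction maps is surjective. -/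
/-- `R` is a *U₂ ring* if for every unimodular pair `(a, b)` and every `c`, the
product of the two natural reduction maps `U(R/(ac)) × U(R/(bc)) → U(R/(c))` is
surjective (expressed here on representatives). -/
def IsU2Ring (R : Type*) [CommRing R] : Prop :=
  ∀ a b c : R, (∃ x y : R, a * x + b * y = 1) →
    ∀ w : R, IsUnit (Ideal.Quotient.mk (Ideal.span {c}) w) →
      ∃ u v : R, IsUnit (Ideal.Quotient.mk (Ideal.span {a * c}) u) ∧
        IsUnit (Ideal.Quotient.mk (Ideal.span {b * c}) v) ∧
        Ideal.Quotient.mk (Ideal.span {c}) (u * v) =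
          Ideal.Quotient.mk (Ideal.span {c}) w

/-- 2×2 matrices are equal if their four entries are. -/
private lemma ext_fin_two {R : Type*} [CommRing R] {M N : Matrix (Fin 2) (Fin 2) R}
    (h00 : M 0 0 = N 0 0) (h01 : M 0 1 = N 0 1)
    (h10 : M 1 0 = N 1 0) (h11 : M 1 1 = N 1 1) : M = N := by
  apply Matrix.ext; intro i j
  fin_cases i <;> fin_cases j <;> assumption

/-- Any 2×2 matrix over a Hermite ring can be brought to upper triangular form by a
left multiplication with a matrix of unit determinant. -/
private lemma triangularize {R : Type*} [CommRing R] (hR : IsHermiteRing R)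
    (A : Matrix (Fin 2) (Fin 2) R) :
    ∃ M : Matrix (Fin 2) (Fin 2) R, IsUnit M.det ∧ ∃ α β γ : R,
      M * A = Matrix.of ![![α, β], ![0, γ]] := by
  obtain ⟨r, s, t, hs, ht, x₀, y₀, hst⟩ := hR (A 0 0) (A 1 0)
  refine ⟨Matrix.of ![![x₀, y₀], ![-t, s]], ?_,
    r, x₀ * A 0 1 + y₀ * A 1 1, -t * A 0 1 + s * A 1 1, ?_⟩
  · have hdet : (Matrix.of ![![x₀, y₀], ![-t, s]] : Matrix (Fin 2) (Fin 2) R).det = 1 := by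
      rw [Matrix.det_fin_two_of]; linear_combination hst
    rw [hdet]; exact isUnit_one
  · refine ext_fin_two ?_ ?_ ?_ ?_
    · simp only [Matrix.mul_apply, Fin.sum_univ_two, Matrix.of_apply, Matrix.cons_val',
        Matrix.cons_val_zero, Matrix.cons_val_one, Matrix.head_cons, Matrix.head_fin_const,
        Matrix.empty_val', Matrix.cons_val_fin_one, Fin.isValue] <;>
        linear_combination x₀ * hs + y₀ * ht + r * hst
    · simp only [Matrix.mul_apply, Fin.sum_univ_two, Matrix.of_apply, Matrix.cons_val',
        Matrix.cons_val_zero, Matrix.cons_val_one, Matrix.head_cons, Matrix.head_fin_const,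
        Matrix.empty_val', Matrix.cons_val_fin_one, Fin.isValue] <;> linear_combination
    · simp only [Matrix.mul_apply, Fin.sum_univ_two, Matrix.of_apply, Matrix.cons_val',
        Matrix.cons_val_zero, Matrix.cons_val_one, Matrix.head_cons, Matrix.head_fin_const,
        Matrix.empty_val', Matrix.cons_val_fin_one, Fin.isValue] <;> linear_combination (-t) * hs + s * ht
    · simp only [Matrix.mul_apply, Fin.sum_univ_two, Matrix.of_apply, Matrix.cons_val',
        Matrix.cons_val_zero, Matrix.cons_val_one, Matrix.head_cons, Matrix.head_fin_const,
        Matrix.empty_val', Matrix.cons_val_fin_one, Fin.isValue] <;> linear_combination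

/-- If the "Kaplansky condition" identity `p·(ac)·x + (p·w + q·(bc))·y = 1` holds, then the
triangular matrix `d • [[ac, w],[0, bc]]` admits an explicit diagonal reduction. -/
private lemma diag_of_T' {R : Type*} [CommRing R] (ac bc w d p q x y : R)
    (hT : p * ac * x + (p * w + q * bc) * y = 1) :
    ∃ M N : Matrix (Fin 2) (Fin 2) R, IsUnit M.det ∧ IsUnit N.det ∧
      M * Matrix.of ![![d * ac, d * w], ![0, d * bc]] * N
        = Matrix.of ![![d, 0], ![0, d * (ac * bc)]] := by
  refine ⟨Matrix.of ![![p, q], ![-(bc * y), ac * x + w * y]],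
    Matrix.of ![![x, -(p * w + q * bc)], ![y, p * ac]], ?_, ?_, ?_⟩
  · have hdet : (Matrix.of ![![p, q], ![-(bc * y), ac * x + w * y]]
        : Matrix (Fin 2) (Fin 2) R).det = 1 := by
      rw [Matrix.det_fin_two_of]; linear_combination hT
    rw [hdet]; exact isUnit_one
  · have hdet : (Matrix.of ![![x, -(p * w + q * bc)], ![y, p * ac]]
        : Matrix (Fin 2) (Fin 2) R).det = 1 := by
      rw [Matrix.det_fin_two_of]; linear_combination hT
    rw [hdet]; exact isUnit_one
  · refine ext_fin_two ?_ ?_ ?_ ?_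
    · simp only [Matrix.mul_apply, Fin.sum_univ_two, Matrix.of_apply, Matrix.cons_val',
        Matrix.cons_val_zero, Matrix.cons_val_one, Matrix.head_cons, Matrix.head_fin_const,
        Matrix.empty_val', Matrix.cons_val_fin_one, Fin.isValue] <;> linear_combination d * hT
    · simp only [Matrix.mul_apply, Fin.sum_univ_two, Matrix.of_apply, Matrix.cons_val',
        Matrix.cons_val_zero, Matrix.cons_val_one, Matrix.head_cons, Matrix.head_fin_const,
        Matrix.empty_val', Matrix.cons_val_fin_one, Fin.isValue] <;> linear_combination
    · simp only [Matrix.mul_apply, Fin.sum_univ_two, Matrix.of_apply, Matrix.cons_val',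
        Matrix.cons_val_zero, Matrix.cons_val_one, Matrix.head_cons, Matrix.head_fin_const,
        Matrix.empty_val', Matrix.cons_val_fin_one, Fin.isValue] <;> linear_combination
    · simp only [Matrix.mul_apply, Fin.sum_univ_two, Matrix.of_apply, Matrix.cons_val',
        Matrix.cons_val_zero, Matrix.cons_val_one, Matrix.head_cons, Matrix.head_fin_const,
        Matrix.empty_val', Matrix.cons_val_fin_one, Fin.isValue] <;> linear_combination (d * ac * bc) * hT

/-- A Hermite ring is an elementary divisor ring iff it is a U₂ ring. -/
theorem hermite_edr_iff_u2 (R : Type*) [CommRing R] (hR : IsHermiteRing R) :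
    IsEDR R ↔ IsU2Ring R := by
  constructor
  · -- EDR → U₂
    intro hEDR a b c hab w hw
    obtain ⟨x, y, hxy⟩ := hab
    obtain ⟨zq, hzq⟩ := isUnit_iff_exists_inv.mp hw
    obtain ⟨z, rfl⟩ := Ideal.Quotient.mk_surjective zq
    have hz1 : Ideal.Quotient.mk (Ideal.span {c}) (w * z)
        = Ideal.Quotient.mk (Ideal.span {c}) 1 := by
      rw [map_mul, map_one]; exact hzq
    obtain ⟨m, hm⟩ := Ideal.mem_span_singleton'.mp (Ideal.Quotient.eq.mp hz1)
    -- hm : m * c = w * z - 1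
    obtain ⟨M, N, hM, hN, d₁, d₂, hd, hMAN⟩ :=
      hEDR (Matrix.of ![![a * c, w], ![0, b * c]])
    -- the (0,0) entry of the equation `M * A * N = diag(d₁, d₂)`
    have h00 : (M * Matrix.of ![![a * c, w], ![0, b * c]] * N) 0 0
        = (Matrix.of ![![d₁, 0], ![0, d₂]] : Matrix (Fin 2) (Fin 2) R) 0 0 := by
      rw [hMAN]
    simp only [Matrix.mul_apply, Fin.sum_univ_two, Matrix.of_apply,
      Matrix.cons_val_zero, Matrix.cons_val_one, Matrix.head_cons,
      mul_zero, zero_mul, add_zero, zero_add, mul_one] at h00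
    have hstar : M 0 0 * (a * c) * N 0 0 + (M 0 0 * w + M 0 1 * (b * c)) * N 1 0 = d₁ := by
      linear_combination h00
    -- d₁ divides every entry of A
    have e1 : M⁻¹ * (M * Matrix.of ![![a * c, w], ![0, b * c]] * N) * N⁻¹
        = Matrix.of ![![a * c, w], ![0, b * c]] := by
      have hMi := Matrix.nonsing_inv_mul M hM
      have hNi := Matrix.mul_nonsing_inv N hN
      calc M⁻¹ * (M * Matrix.of ![![a * c, w], ![0, b * c]] * N) * N⁻¹
          = (M⁻¹ * M) * Matrix.of ![![a * c, w], ![0, b * c]] * (N * N⁻¹) := by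
            simp only [Matrix.mul_assoc]
        _ = Matrix.of ![![a * c, w], ![0, b * c]] := by
            rw [hMi, hNi, Matrix.one_mul, Matrix.mul_one]
    have hAinv : Matrix.of ![![a * c, w], ![0, b * c]]
        = M⁻¹ * (Matrix.of ![![d₁, 0], ![0, d₂]] : Matrix (Fin 2) (Fin 2) R) * N⁻¹ := by
      calc Matrix.of ![![a * c, w], ![0, b * c]]
          = M⁻¹ * (M * Matrix.of ![![a * c, w], ![0, b * c]] * N) * N⁻¹ := e1.symm
        _ = M⁻¹ * (Matrix.of ![![d₁, 0], ![0, d₂]] : Matrix (Fin 2) (Fin 2) R) * N⁻¹ := by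
            rw [hMAN]
    have hd_entries : ∀ i j, d₁ ∣ (Matrix.of ![![a * c, w], ![0, b * c]]
        : Matrix (Fin 2) (Fin 2) R) i j := by
      intro i j
      rw [hAinv]
      obtain ⟨k, hk⟩ := hd
      refine ⟨M⁻¹ i 0 * N⁻¹ 0 j + M⁻¹ i 1 * k * N⁻¹ 1 j, ?_⟩
      simp only [Matrix.mul_apply, Fin.sum_univ_two, Matrix.of_apply,
        Matrix.cons_val_zero, Matrix.cons_val_one, Matrix.head_cons,
        mul_zero, zero_mul, add_zero, zero_add]
      rw [hk]; ring
    have hd_ac : d₁ ∣ a * c := by simpa using hd_entries 0 0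
    have hd_w : d₁ ∣ w := by simpa using hd_entries 0 1
    have hd_bc : d₁ ∣ b * c := by simpa using hd_entries 1 1
    -- hence d₁ is a unit
    have hone : d₁ ∣ 1 := by
      have h1 : (1 : R) = w * z - (a * c) * (m * x) - (b * c) * (m * y) := by
        linear_combination c * m * hxy + hm
      rw [h1]
      exact dvd_sub (dvd_sub (hd_w.mul_right z) (hd_ac.mul_right (m * x)))
        (hd_bc.mul_right (m * y))
    obtain ⟨ε, hε⟩ := isUnit_iff_exists_inv.mp (isUnit_of_dvd_one hone)
    -- the witnesses
    refine ⟨M 0 0 * w + M 0 1 * (b * c), ((a * c) * N 0 0 + w * N 1 0) * ε, ?_, ?_, ?_⟩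
    · apply isUnit_iff_exists_inv.mpr
      refine ⟨Ideal.Quotient.mk _ (N 1 0 * ε), ?_⟩
      rw [← map_mul]
      have hmem : Ideal.Quotient.mk (Ideal.span {a * c})
          ((M 0 0 * w + M 0 1 * (b * c)) * (N 1 0 * ε))
          = Ideal.Quotient.mk (Ideal.span {a * c}) 1 :=
        Ideal.Quotient.eq.mpr (Ideal.mem_span_singleton'.mpr
          ⟨-(M 0 0 * N 0 0 * ε), by linear_combination (-ε) * hstar - hε⟩)
      rw [hmem, map_one]
    · apply isUnit_iff_exists_inv.mpr
      refine ⟨Ideal.Quotient.mk _ (M 0 0), ?_⟩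
      rw [← map_mul]
      have hmem : Ideal.Quotient.mk (Ideal.span {b * c})
          (((a * c) * N 0 0 + w * N 1 0) * ε * M 0 0)
          = Ideal.Quotient.mk (Ideal.span {b * c}) 1 :=
        Ideal.Quotient.eq.mpr (Ideal.mem_span_singleton'.mpr
          ⟨-(M 0 1 * N 1 0 * ε), by linear_combination (-ε) * hstar - hε⟩)
      rw [hmem, map_one]
    · exact Ideal.Quotient.eq.mpr (Ideal.mem_span_singleton'.mpr
        ⟨ε * (a * b * c) * (M 0 1) * (N 0 0),
          by linear_combination (-(ε * w)) * hstar - w * hε⟩)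
  · -- U₂ → EDR
    intro hU2 A
    -- Step 1: triangularize
    obtain ⟨M₁, hM₁det, α, β, γ, hM₁A⟩ := triangularize hR A
    -- Step 2: extract the gcd of the entries
    obtain ⟨r₁, s₁, t₁, hr1, hb1, x₁, y₁, h11⟩ := hR α β
    obtain ⟨d, e, f₀, hr2, hg2, x₂, y₂, h22⟩ := hR r₁ γ
    obtain ⟨c', a, b, ha4, hb4, xa, yb, hab4⟩ := hR (e * s₁) f₀
    -- so α = d*(c'*a), β = d*(e*t₁), γ = d*(c'*b), with (a,b) unimodular and
    -- w := e*t₁ a unit mod c'.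
    have hwc : (e * t₁) * (y₁ * x₂) + c' * (a * (x₁ * x₂) + b * y₂) = 1 := by
      linear_combination (e * x₂) * h11 + h22 - (x₁ * x₂) * ha4 - y₂ * hb4
    have hwu : IsUnit (Ideal.Quotient.mk (Ideal.span {c'}) (e * t₁)) := by
      refine isUnit_iff_exists_inv.mpr ⟨Ideal.Quotient.mk _ (y₁ * x₂), ?_⟩
      rw [← map_mul]
      have h9 : Ideal.Quotient.mk (Ideal.span {c'}) ((e * t₁) * (y₁ * x₂))
          = Ideal.Quotient.mk (Ideal.span {c'}) 1 :=
        Ideal.Quotient.eq.mpr (Ideal.mem_span_singleton'.mpr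
          ⟨-(a * (x₁ * x₂) + b * y₂), by linear_combination -hwc⟩)
      rw [h9, map_one]
    -- Step 3: apply U₂
    obtain ⟨u, v₀, hu, hv, huv⟩ := hU2 a b c' ⟨xa, yb, hab4⟩ (e * t₁) hwu
    -- extract concrete witnesses
    obtain ⟨Yq, hYq⟩ := isUnit_iff_exists_inv.mp hu
    obtain ⟨Y₀, rfl⟩ := Ideal.Quotient.mk_surjective Yq
    have hY₀mem : u * Y₀ - 1 ∈ Ideal.span {a * c'} := by
      refine Ideal.Quotient.eq.mp ?_
      rw [map_mul]; rw [show Ideal.Quotient.mk (Ideal.span {a * c'}) 1 = 1 from map_one _]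
      exact hYq
    obtain ⟨ρ₀, hρ₀⟩ := Ideal.mem_span_singleton'.mp hY₀mem
    obtain ⟨Vq, hVq⟩ := isUnit_iff_exists_inv.mp hv
    obtain ⟨V₀, rfl⟩ := Ideal.Quotient.mk_surjective Vq
    have hV₀mem : v₀ * V₀ - 1 ∈ Ideal.span {b * c'} := by
      refine Ideal.Quotient.eq.mp ?_
      rw [map_mul]; rw [show Ideal.Quotient.mk (Ideal.span {b * c'}) 1 = 1 from map_one _]
      exact hVq
    obtain ⟨θ₀, hθ₀⟩ := Ideal.mem_span_singleton'.mp hV₀mem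
    obtain ⟨m₀, hm₀⟩ := Ideal.mem_span_singleton'.mp (Ideal.Quotient.eq.mp huv)
    -- Step 4: build an "entangled" pair of inverses using the Hermite property
    obtain ⟨hh, Y₂, v₂, hY0, hv0, lam₂, μ₂, hlm⟩ := hR Y₀ v₀
    have cop_a_b : IsCoprime a b := ⟨xa, yb, by linear_combination hab4⟩
    have cop_a_Y₂ : IsCoprime a Y₂ :=
      ⟨-(ρ₀ * c'), u * hh, by linear_combination (-u) * hY0 - hρ₀⟩
    have cop_v₂_b : IsCoprime v₂ b :=
      ⟨V₀ * hh, -(θ₀ * c'), by linear_combination (-V₀) * hv0 - hθ₀⟩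
    have cop_v₂_Y₂ : IsCoprime v₂ Y₂ := ⟨μ₂, lam₂, by linear_combination hlm⟩
    have cop_main : IsCoprime (a * v₂ ^ 2) (b * Y₂ ^ 2) := by
      have h1 : IsCoprime a (b * Y₂ ^ 2) := cop_a_b.mul_right cop_a_Y₂.pow_right
      have h2 : IsCoprime v₂ (b * Y₂ ^ 2) := cop_v₂_b.mul_right cop_v₂_Y₂.pow_right
      exact h1.mul_left h2.pow_left
    obtain ⟨P₁, Q₁, hPQ⟩ := cop_main
    set Ye := hh * Y₂ + a * c' * (v₂ * P₁) with hYe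
    set ve := hh * v₂ - b * c' * (Y₂ * Q₁) with hve
    set m1 := m₀ - u * b * (Y₂ * Q₁) with hm1
    have e₀ : u * Y₂ * hh - a * ρ₀ * c' = 1 := by
      linear_combination (-u) * hY0 - hρ₀
    have e₁ : v₂ * Ye - Y₂ * ve = c' := by
      linear_combination v₂ * hYe - Y₂ * hve + c' * hPQ
    have e₂ : lam₂ * Ye + μ₂ * ve
        = hh + c' * (a * lam₂ * v₂ * P₁ - b * μ₂ * Y₂ * Q₁) := by
      linear_combination lam₂ * hYe + μ₂ * hve + hh * hlm
    have hent : (u * Y₂ * μ₂ + u * Y₂ * (a * lam₂ * v₂ * P₁ - b * μ₂ * Y₂ * Q₁) * Y₂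
          + a * ρ₀ * Y₂) * ve
        + (u * Y₂ * lam₂ - u * Y₂ * (a * lam₂ * v₂ * P₁ - b * μ₂ * Y₂ * Q₁) * v₂
          - a * ρ₀ * v₂) * Ye = 1 := by
      linear_combination (u * Y₂) * e₂
        + (-(a * ρ₀) - u * Y₂ * (a * lam₂ * v₂ * P₁ - b * μ₂ * Y₂ * Q₁)) * e₁ + e₀
    have cop_ve_Ye : IsCoprime ve Ye := ⟨_, _, hent⟩
    have cop_ve_bc : IsCoprime ve (b * c') :=
      ⟨V₀, Y₂ * Q₁ * V₀ - θ₀, by linear_combination V₀ * hve + (-V₀) * hv0 - hθ₀⟩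
    obtain ⟨Vv, Th, hVθ⟩ := cop_ve_bc.mul_right cop_ve_Ye
    have hYu : u * Ye - a * c' * (ρ₀ + u * (v₂ * P₁)) = 1 := by
      linear_combination u * hYe + (-u) * hY0 - hρ₀
    have huve : u * ve = (e * t₁) + c' * m1 := by
      linear_combination u * hve + (-u) * hv0 - hm₀ + (-c') * hm1
    set X := (-(ρ₀ + u * (v₂ * P₁))) * ve + m1 * Ye * xa with hX
    set Qq := Th + m1 * Vv * yb with hQq
    have hT'id : Vv * (c' * a) * X + (Vv * (e * t₁) + Qq * (c' * b)) * Ye = 1 := by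
      linear_combination (Vv * (c' * a)) * hX + (c' * b * Ye) * hQq + (ve * Vv) * hYu
        + hVθ - (Vv * Ye) * huve + (c' * m1 * Vv * Ye) * hab4
    -- Step 5: assemble the diagonal reduction
    have hTri : M₁ * A = Matrix.of ![![d * (c' * a), d * (e * t₁)], ![0, d * (c' * b)]] := by
      rw [hM₁A]
      refine ext_fin_two ?_ ?_ ?_ ?_
      · simp only [Matrix.of_apply, Matrix.cons_val', Matrix.cons_val_zero,
          Matrix.cons_val_one, Matrix.head_cons, Matrix.head_fin_const,
          Matrix.empty_val', Matrix.cons_val_fin_one, Fin.isValue] <;>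
          linear_combination hr1 + s₁ * hr2 + d * ha4
      · simp only [Matrix.of_apply, Matrix.cons_val', Matrix.cons_val_zero,
          Matrix.cons_val_one, Matrix.head_cons, Matrix.head_fin_const,
          Matrix.empty_val', Matrix.cons_val_fin_one, Fin.isValue] <;> linear_combination hb1 + t₁ * hr2
      · simp only [Matrix.of_apply, Matrix.cons_val', Matrix.cons_val_zero,
          Matrix.cons_val_one, Matrix.head_cons, Matrix.head_fin_const,
          Matrix.empty_val', Matrix.cons_val_fin_one, Fin.isValue] <;> linear_combination
      · simp only [Matrix.of_apply, Matrix.cons_val', Matrix.cons_val_zero,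
          Matrix.cons_val_one, Matrix.head_cons, Matrix.head_fin_const,
          Matrix.empty_val', Matrix.cons_val_fin_one, Fin.isValue] <;> linear_combination hg2 + d * hb4
    obtain ⟨M₂, N₂, hM₂, hN₂, hdiag⟩ :=
      diag_of_T' (c' * a) (c' * b) (e * t₁) d Vv Qq X Ye hT'id
    refine ⟨M₂ * M₁, N₂, ?_, hN₂, d, d * ((c' * a) * (c' * b)),
      ⟨(c' * a) * (c' * b), rfl⟩, ?_⟩
    · rw [Matrix.det_mul]; exact hM₂.mul hM₁det
    · calc M₂ * M₁ * A * N₂ = M₂ * (M₁ * A) * N₂ := by rw [Matrix.mul_assoc M₂ M₁ A]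
        _ = M₂ * Matrix.of ![![d * (c' * a), d * (e * t₁)], ![0, d * (c' * b)]] * N₂ := by
            rw [hTri]
        _ = Matrix.of ![![d, 0], ![0, d * ((c' * a) * (c' * b))]] := hdiag
end

section
/- Let R be a commutative ring such that every element of R is the square of an element of R. (i) If R is a (WSU)₂ ring (for every unimodular A ∈ M₂(R) there exists N ∈ GL₂(R) with A·N symmetric), then R is a U₂ ring: for every unimodular pair (a,b) ∈ R² and every c ∈ R, the map U(R/(a·c)) × U(R/(b·c)) → U(R/(c)) sending a pair of units to the product of their images under the natural reduction maps is surjective. (ii) If moreover R is an (SU)₂ ring (for every A ∈ M₂(R) there exists N ∈ GL₂(R) with A·N symmetric), then R is an elementary divisor ring. -/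
/-!
A symmetric unimodular `S = !![α, β; β, δ]` satisfies `β² ≡ αδ` modulo `det S`, so `α` and `δ`
alone generate the unit ideal there: `c₁ α + c₂ δ ≡ 1`. When every element is a square, the
cross terms of `uᵀ S v` cancel for `u = (√c₁, √-c₂)`, `v = (√c₁, -√-c₂)`, giving
`uᵀ S v ≡ 1 (mod det S)`; via `S = A N` the same holds for every unimodular `A` that `N`
symmetrizes.

(i) For `A = !![w, a c; b c, 0]`, the first entries of `uᵀ A` and `A v` are units modulo `a c`
and `b c` whose product is `w` modulo `c`.

(ii) An (SU)₂ ring is Hermite, so by Kaplansky it suffices to reduce a unimodular lower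
triangular `T` to `diag(1, h)`. In a Hermite ring the congruence `uᵀ T v ≡ 1 (mod det T)` lifts
to an equation `φᵀ T z = 1` by correcting `v` with an adjugate term, and a bilinear value `1`
yields the reduction.
-/

open Matrix

section

variable {R : Type*} [CommRing R]

theorem Ideal.Quotient.isUnit_mk_span_singleton_iff {c x : R} :
    IsUnit (Ideal.Quotient.mk (Ideal.span {c}) x) ↔ ∃ y z : R, x * y + c * z = 1 := by
  simp only [isUnit_iff_exists_inv, Ideal.Quotient.mk_surjective.exists, ← map_mul,
    ← map_one (Ideal.Quotient.mk (Ideal.span {c})), Ideal.Quotient.mk_eq_mk_iff_sub_mem,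
    Ideal.mem_span_singleton]
  constructor
  · rintro ⟨y, z, hz⟩
    exact ⟨y, -z, by linear_combination hz⟩
  · rintro ⟨y, z, h⟩
    exact ⟨y, -z, by linear_combination h⟩

theorem matUnimodular_iff_exists_trace_mul_eq_one (A : Matrix (Fin 2) (Fin 2) R) :
    MatUnimodular A ↔ ∃ P : Matrix (Fin 2) (Fin 2) R, (P * A).trace = 1 := by
  simp only [MatUnimodular, trace_fin_two, mul_apply, Fin.sum_univ_two]
  constructor
  · rintro ⟨p, q, r, s, h⟩
    refine ⟨!![p, r; q, s], ?_⟩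
    simp only [of_apply, cons_val', cons_val_zero, cons_val_one, cons_val_fin_one]
    linear_combination h
  · rintro ⟨P, h⟩
    exact ⟨P 0 0, P 1 0, P 0 1, P 1 1, by linear_combination h⟩

theorem MatUnimodular.mul_of_isUnit_det {A N : Matrix (Fin 2) (Fin 2) R} (hA : MatUnimodular A)
    (hN : IsUnit N.det) : MatUnimodular (A * N) := by
  obtain ⟨P, hP⟩ := (matUnimodular_iff_exists_trace_mul_eq_one A).mp hA
  refine (matUnimodular_iff_exists_trace_mul_eq_one _).mpr ⟨N⁻¹ * P, ?_⟩
  rw [Matrix.mul_assoc, trace_mul_comm, Matrix.mul_assoc, Matrix.mul_assoc,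
    mul_nonsing_inv N hN, Matrix.mul_one, hP]

theorem exists_dotProduct_mulVec_eq_one_add_det_mul_of_isSymm (hsq : ∀ x : R, ∃ y, y * y = x)
    {S : Matrix (Fin 2) (Fin 2) R} (hS : S.IsSymm) (hU : MatUnimodular S) :
    ∃ u v : Fin 2 → R, ∃ Ψ : R, u ⬝ᵥ S *ᵥ v = 1 + S.det * Ψ := by
  obtain ⟨p, q, r, s, h⟩ := hU
  have hS₁₀ : S 1 0 = S 0 1 := by simpa using congrFun (congrFun hS 0) 1
  rw [hS₁₀] at h
  set m := p * S 0 0 + s * S 1 1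
  -- Square `(q + r) * S 0 1 = 1 - m` and use `S 0 1 ^ 2 ≡ S 0 0 * S 1 1 (mod det S)`.
  have hdiag : ((q + r) ^ 2 * S 1 1 + p * (2 - m)) * S 0 0 + s * (2 - m) * S 1 1 =
      1 + S.det * (q + r) ^ 2 := by
    rw [det_fin_two, hS₁₀]
    linear_combination ((q + r) * S 0 1 + 1 - m) * h
  obtain ⟨x, hx⟩ := hsq ((q + r) ^ 2 * S 1 1 + p * (2 - m))
  obtain ⟨y, hy⟩ := hsq (-(s * (2 - m)))
  refine ⟨![x, y], ![x, -y], (q + r) ^ 2, ?_⟩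
  simp only [vec2_dotProduct, mulVec_fin_two, cons_val_zero, cons_val_one, cons_val_fin_one,
    hS₁₀]
  linear_combination hdiag + S 0 0 * hx - S 1 1 * hy

theorem exists_dotProduct_mulVec_eq_one_add_det_mul (hsq : ∀ x : R, ∃ y, y * y = x)
    {A N : Matrix (Fin 2) (Fin 2) R} (hA : MatUnimodular A) (hN : IsUnit N.det)
    (hAN : (A * N).IsSymm) :
    ∃ u v : Fin 2 → R, ∃ Ψ : R, u ⬝ᵥ A *ᵥ v = 1 + A.det * Ψ := by
  obtain ⟨u, v, Ψ, h⟩ :=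
    exists_dotProduct_mulVec_eq_one_add_det_mul_of_isSymm hsq hAN (hA.mul_of_isUnit_det hN)
  exact ⟨u, N *ᵥ v, N.det * Ψ, by rw [mulVec_mulVec, h, det_mul, mul_assoc]⟩

theorem isU2Ring_of_forall_unimodular_isSymm (hsq : ∀ x : R, ∃ y, y * y = x)
    (hW : ∀ A : Matrix (Fin 2) (Fin 2) R, MatUnimodular A →
      ∃ N : Matrix (Fin 2) (Fin 2) R, IsUnit N.det ∧ (A * N).IsSymm) :
    IsU2Ring R := by
  rintro a b c ⟨x, y, hab⟩ w hw
  obtain ⟨w', l, hw'⟩ := Ideal.Quotient.isUnit_mk_span_singleton_iff.mp hw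
  have hA : MatUnimodular !![w, a * c; b * c, 0] := ⟨w', l * x, l * y, 0, by
    simp only [of_apply, cons_val', cons_val_zero, cons_val_one, cons_val_fin_one]
    linear_combination hw' + c * l * hab⟩
  obtain ⟨N, hN, hAN⟩ := hW _ hA
  obtain ⟨u, v, Ψ, h⟩ := exists_dotProduct_mulVec_eq_one_add_det_mul hsq hA hN hAN
  simp only [vec2_dotProduct, mulVec_fin_two, det_fin_two_of, of_apply, cons_val',
    cons_val_zero, cons_val_one, cons_val_fin_one] at h
  refine ⟨u 0 * w + u 1 * (b * c), w * v 0 + a * c * v 1, ?_, ?_, ?_⟩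
  · exact Ideal.Quotient.isUnit_mk_span_singleton_iff.mpr
      ⟨v 0, u 0 * v 1 + b * c * Ψ, by linear_combination h⟩
  · exact Ideal.Quotient.isUnit_mk_span_singleton_iff.mpr
      ⟨u 0, u 1 * v 0 + a * c * Ψ, by linear_combination h⟩
  · rw [Ideal.Quotient.mk_eq_mk_iff_sub_mem, Ideal.mem_span_singleton]
    exact ⟨a * b * c * (u 1 * v 1 - w * Ψ), by linear_combination w * h⟩

theorem isHermiteRing_of_forall_isSymm
    (hSU : ∀ A : Matrix (Fin 2) (Fin 2) R,
      ∃ N : Matrix (Fin 2) (Fin 2) R, IsUnit N.det ∧ (A * N).IsSymm) :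
    IsHermiteRing R := by
  intro a b
  obtain ⟨N, hN, hAN⟩ := hSU !![a, b; 0, 0]
  have hcol : a * N 0 1 + b * N 1 1 = 0 := by
    simpa [vecMul, vecHead, vecTail] using congrFun (congrFun hAN 1) 0
  obtain ⟨e, he⟩ := isUnit_iff_exists_inv.mp hN
  rw [det_fin_two] at he
  -- `(a, b) * N = (r, 0)`, so `(a, b)` is `r` times the first row of `N⁻¹`.
  exact ⟨a * N 0 0 + b * N 1 0, e * N 1 1, -(e * N 0 1),
    by linear_combination -a * he - e * N 1 0 * hcol,
    by linear_combination -b * he + e * N 0 0 * hcol, N 0 0, N 1 0, by linear_combination he⟩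

namespace IsHermiteRing

variable (hH : IsHermiteRing R)
include hH

theorem exists_mul_eq_lowerTriangular (A : Matrix (Fin 2) (Fin 2) R) :
    ∃ N : Matrix (Fin 2) (Fin 2) R, N.det = 1 ∧ ∃ a b c : R, A * N = !![a, 0; b, c] := by
  obtain ⟨r, s, t, hs, ht, x, y, hxy⟩ := hH (A 0 0) (A 0 1)
  refine ⟨!![x, -t; y, s], by rw [det_fin_two_of]; linear_combination hxy,
    r, A 1 0 * x + A 1 1 * y, A 1 1 * s - A 1 0 * t, ?_⟩
  ext i j
  fin_cases i <;> fin_cases j <;>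
    simp only [Fin.zero_eta, Fin.mk_one, mul_apply, Fin.sum_univ_two, of_apply, cons_val',
      cons_val_zero, cons_val_one, cons_val_fin_one]
  · linear_combination x * hs + y * ht + r * hxy
  · linear_combination -t * hs + s * ht
  · ring

theorem exists_factor_unimodular_triple (a b c : R) :
    ∃ d a' b' c' : R, a = d * a' ∧ b = d * b' ∧ c = d * c' ∧
      ∃ x y z : R, x * a' + y * b' + z * c' = 1 := by
  obtain ⟨r, s₁, t₁, ha, hb, x₁, y₁, h₁⟩ := hH a b
  obtain ⟨d, s₂, t₂, hr, hc, x₂, y₂, h₂⟩ := hH r c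
  exact ⟨d, s₂ * s₁, s₂ * t₁, t₂, by rw [ha, hr]; ring, by rw [hb, hr]; ring, hc,
    x₂ * x₁, x₂ * y₁, y₂, by linear_combination x₂ * s₂ * h₁ + h₂⟩

theorem isEDR
    (hT : ∀ a b c : R, MatUnimodular !![a, 0; b, c] →
      ∃ M N : Matrix (Fin 2) (Fin 2) R, IsUnit M.det ∧ IsUnit N.det ∧
        ∃ h : R, M * !![a, 0; b, c] * N = !![1, 0; 0, h]) :
    IsEDR R := by
  intro A
  obtain ⟨N₁, hN₁, a, b, c, hA⟩ := hH.exists_mul_eq_lowerTriangular A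
  obtain ⟨d, a', b', c', rfl, rfl, rfl, x, y, z, hxyz⟩ := hH.exists_factor_unimodular_triple a b c
  obtain ⟨M, N, hM, hN, h, hMN⟩ := hT a' b' c' ⟨x, 0, y, z, by
    simp only [of_apply, cons_val', cons_val_zero, cons_val_one, cons_val_fin_one]
    linear_combination hxyz⟩
  refine ⟨M, N₁ * N, hM, by rwa [det_mul, hN₁, one_mul], d, d * h, dvd_mul_right d h, ?_⟩
  have hsmul : !![d * a', 0; d * b', d * c'] = d • !![a', 0; b', c'] := by
    ext i j; fin_cases i <;> fin_cases j <;> simp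
  calc M * A * (N₁ * N) = d • (M * !![a', 0; b', c'] * N) := by
        rw [← Matrix.mul_assoc, Matrix.mul_assoc M, hA, hsmul, Matrix.mul_smul, Matrix.smul_mul]
    _ = !![d, 0; 0, d * h] := by
        rw [hMN]; ext i j; fin_cases i <;> fin_cases j <;> simp

theorem exists_dotProduct_mulVec_eq_one (S : Matrix (Fin 2) (Fin 2) R) {u v : Fin 2 → R}
    {Ψ : R} (h : u ⬝ᵥ S *ᵥ v = 1 + S.det * Ψ) :
    ∃ φ z : Fin 2 → R, φ ⬝ᵥ S *ᵥ z = 1 := by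
  obtain ⟨e, k₀, k₁, hk₀, hk₁, m₀, m₁, hkm⟩ := hH ((S *ᵥ v) 0) ((S *ᵥ v) 1)
  have hSz : S *ᵥ (v + adjugate S *ᵥ ![m₁, -m₀]) = S *ᵥ v + S.det • ![m₁, -m₀] := by
    rw [mulVec_add, mulVec_mulVec, mul_adjugate, smul_mulVec, one_mulVec]
  -- `φ ⬝ᵥ ![k₀, k₁] = u ⬝ᵥ ![k₀, k₁]` and `φ ⬝ᵥ ![m₁, -m₀] = -Ψ`, so correcting `v` by the
  -- adjugate term cancels the error `det S * Ψ`.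
  refine ⟨(u 0 * k₀ + u 1 * k₁) • ![m₀, m₁] + Ψ • ![-k₁, k₀],
    v + adjugate S *ᵥ ![m₁, -m₀], ?_⟩
  rw [vec2_dotProduct, hk₀, hk₁] at h
  simp only [hSz, vec2_dotProduct, Pi.add_apply, Pi.smul_apply, hk₀, hk₁, smul_eq_mul,
    cons_val_zero, cons_val_one, cons_val_fin_one]
  linear_combination h + (e * (u 0 * k₀ + u 1 * k₁) - S.det * Ψ) * hkm

end IsHermiteRing

theorem exists_mul_mul_eq_of_dotProduct_mulVec_eq_one {B : Matrix (Fin 2) (Fin 2) R}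
    {φ z : Fin 2 → R} (h : φ ⬝ᵥ B *ᵥ z = 1) :
    ∃ M N : Matrix (Fin 2) (Fin 2) R, IsUnit M.det ∧ IsUnit N.det ∧
      ∃ d : R, M * B * N = !![1, 0; 0, d] := by
  set κ := B *ᵥ z
  set ρ := φ ᵥ* B
  have hρ : ρ ⬝ᵥ z = 1 := by rw [← dotProduct_mulVec, h]
  rw [vec2_dotProduct] at h hρ
  -- `det M₁ = φ ⬝ᵥ κ` and `det N = ρ ⬝ᵥ z` are both `1`, and `P` has first row `(1, 0)`.
  set M₁ := !![φ 0, φ 1; -κ 1, κ 0]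
  set N := !![z 0, -ρ 1; z 1, ρ 0]
  have hM₁B : (M₁ * B) 0 = ρ := by
    ext j
    simp [M₁, ρ, mul_apply, vecMul]
  set P := M₁ * B * N with hP
  have hP₀ : P 0 0 = 1 ∧ P 0 1 = 0 := by
    simp only [P, mul_apply (M := M₁ * B), Fin.sum_univ_two, hM₁B, N, of_apply, cons_val',
      cons_val_zero, cons_val_one, cons_val_fin_one]
    exact ⟨by linear_combination hρ, by ring⟩
  refine ⟨!![1, 0; -P 1 0, 1] * M₁, N, ?_, ?_, P 1 1, ?_⟩
  · rw [det_mul, det_fin_two_of, det_fin_two_of]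
    convert isUnit_one using 1
    linear_combination h
  · rw [det_fin_two_of]
    convert isUnit_one using 1
    linear_combination hρ
  · rw [Matrix.mul_assoc, Matrix.mul_assoc, ← Matrix.mul_assoc M₁, ← hP]
    ext i j; fin_cases i <;> fin_cases j <;> simp [mul_apply, hP₀]

theorem isEDR_of_forall_isSymm (hsq : ∀ x : R, ∃ y, y * y = x)
    (hSU : ∀ A : Matrix (Fin 2) (Fin 2) R,
      ∃ N : Matrix (Fin 2) (Fin 2) R, IsUnit N.det ∧ (A * N).IsSymm) :
    IsEDR R := by
  have hH := isHermiteRing_of_forall_isSymm hSU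
  refine hH.isEDR fun a b c hT => ?_
  obtain ⟨N, hN, hTN⟩ := hSU !![a, 0; b, c]
  obtain ⟨u, v, Ψ, h⟩ := exists_dotProduct_mulVec_eq_one_add_det_mul hsq hT hN hTN
  obtain ⟨φ, z, h₁⟩ := hH.exists_dotProduct_mulVec_eq_one _ h
  exact exists_mul_mul_eq_of_dotProduct_mulVec_eq_one h₁

end

/-- Suppose every element of `R` is a square. (i) If `R` is a (WSU)₂ ring, then `R`
is a U₂ ring. (ii) If moreover `R` is an (SU)₂ ring, then `R` is an elementary
divisor ring. -/
theorem wsu2_squares_u2_and_su2_edr (R : Type*) [CommRing R]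
    (hsq : ∀ x : R, ∃ y : R, y * y = x) :
    ((∀ A : Matrix (Fin 2) (Fin 2) R, MatUnimodular A →
        ∃ N : Matrix (Fin 2) (Fin 2) R, IsUnit N.det ∧ (A * N).transpose = A * N) →
      IsU2Ring R) ∧
    ((∀ A : Matrix (Fin 2) (Fin 2) R,
        ∃ N : Matrix (Fin 2) (Fin 2) R, IsUnit N.det ∧ (A * N).transpose = A * N) →
      IsEDR R) :=
  ⟨isU2Ring_of_forall_unimodular_isSymm hsq, isEDR_of_forall_isSymm hsq⟩
end

section
/- Let R be a commutative ring and let (a,b,c,d) ∈ R⁴ be unimodular; set A = [[a,b],[c,d]] ∈ M₂(R). The following are equivalent: (1) there exist M, N ∈ GL₂(R) with M·A·N = diag(1, a·d − b·c); (2) A is simply extendable; (3) there exists (e,f) ∈ R² such that the pair (a·e + c·f, b·e + d·f) is unimodular; (4) there exists (x,y,z,w) ∈ R⁴ with a·x + b·y + c·z + d·w = 1 such that the matrix [[x,y],[z,w]] is non-full. -/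
-- (3) → (1)

lemma aux31 {R : Type*} [CommRing R] (a b c d e f x y : R)
    (hef : (a * e + c * f) * x + (b * e + d * f) * y = 1) :
    ∃ M N : Matrix (Fin 2) (Fin 2) R, IsUnit M.det ∧ IsUnit N.det ∧
        M * Matrix.of ![![a, b], ![c, d]] * N =
          Matrix.of ![![1, 0], ![0, a * d - b * c]] := by
  set g : R := a * x + b * y with hg
  set h : R := c * x + d * y with hh
  set γ : R := (g * c - h * a) * x + (g * d - h * b) * y with hγ
  refine ⟨Matrix.of ![![e, f], ![-γ * e - h, g - γ * f]],
          Matrix.of ![![x, -(b * e + d * f)], ![y, a * e + c * f]], ?_, ?_, ?_⟩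
  · have : (Matrix.of ![![e, f], ![-γ * e - h, g - γ * f]] : Matrix (Fin 2) (Fin 2) R).det = 1 := by
      simp [Matrix.det_fin_two, hg, hh]
      linear_combination hef
    rw [this]; exact isUnit_one
  · have : (Matrix.of ![![x, -(b * e + d * f)], ![y, a * e + c * f]] : Matrix (Fin 2) (Fin 2) R).det = 1 := by
      simp [Matrix.det_fin_two]
      linear_combination hef
    rw [this]; exact isUnit_one
  · ext i j
    fin_cases i <;> fin_cases j <;>
      simp [Matrix.mul_apply, Fin.sum_univ_two, hg, hh, hγ]
    · linear_combination hef
    · ring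
    · linear_combination (-(((a*x+b*y)*c - (c*x+d*y)*a)*x + ((a*x+b*y)*d - (c*x+d*y)*b)*y)) * hef
    · linear_combination (a*d - b*c) * hef

-- (3) → (2)
lemma aux32 {R : Type*} [CommRing R] (a b c d e f x y : R)
    (hef : (a * e + c * f) * x + (b * e + d * f) * y = 1) :
    SimplyExtendable (Matrix.of ![![a, b], ![c, d]]) := by
  refine ⟨Matrix.of ![![a, b, -f], ![c, d, e], ![y, -x, 0]], ?_, ?_, ?_⟩
  · simp [Matrix.det_fin_three]
    linear_combination hef
  · intro i j; fin_cases i <;> fin_cases j <;> rfl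
  · rfl

-- (2) → (3)
lemma aux23 {R : Type*} [CommRing R] (a b c d : R)
    (h : SimplyExtendable (Matrix.of ![![a, b], ![c, d]])) :
    ∃ e f x y : R, (a * e + c * f) * x + (b * e + d * f) * y = 1 := by
  obtain ⟨B, hdet, hblk, h22⟩ := h
  have h00 : B 0 0 = a := by simpa using hblk 0 0
  have h01 : B 0 1 = b := by simpa using hblk 0 1
  have h10 : B 1 0 = c := by simpa using hblk 1 0
  have h11 : B 1 1 = d := by simpa using hblk 1 1
  rw [Matrix.det_fin_three, h00, h01, h10, h11, h22] at hdet
  exact ⟨B 1 2, -B 0 2, -B 2 1, B 2 0, by linear_combination hdet⟩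


/-- For a unimodular quadruple `(a,b,c,d)` with associated matrix `A = [[a,b],[c,d]]`,
the four statements (diagonal reduction to `diag(1, det A)`, simple extendability,
existence of `(e,f)` with `(ae+cf, be+df)` unimodular, and existence of a non-full
unimodular-relation matrix) are equivalent. -/
theorem four_equivalent_statements (R : Type*) [CommRing R] (a b c d : R)
    (hunim : ∃ x y z w : R, a * x + b * y + c * z + d * w = 1) :
    ((∃ M N : Matrix (Fin 2) (Fin 2) R, IsUnit M.det ∧ IsUnit N.det ∧
        M * Matrix.of ![![a, b], ![c, d]] * N =
          Matrix.of ![![1, 0], ![0, a * d - b * c]]) ↔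
      SimplyExtendable (Matrix.of ![![a, b], ![c, d]])) ∧
    (SimplyExtendable (Matrix.of ![![a, b], ![c, d]]) ↔
      ∃ e f : R, ∃ x y : R, (a * e + c * f) * x + (b * e + d * f) * y = 1) ∧
    ((∃ e f : R, ∃ x y : R, (a * e + c * f) * x + (b * e + d * f) * y = 1) ↔
      ∃ x y z w : R, a * x + b * y + c * z + d * w = 1 ∧
        NonFull (Matrix.of ![![x, y], ![z, w]])) := by
  have h13 : (∃ M N : Matrix (Fin 2) (Fin 2) R, IsUnit M.det ∧ IsUnit N.det ∧
        M * Matrix.of ![![a, b], ![c, d]] * N =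
          Matrix.of ![![1, 0], ![0, a * d - b * c]]) →
      ∃ e f x y : R, (a * e + c * f) * x + (b * e + d * f) * y = 1 := by
    rintro ⟨M, N, _, _, hMN⟩
    have h00 := congrFun (congrFun hMN 0) 0
    simp [Matrix.mul_apply, Fin.sum_univ_two] at h00
    exact ⟨M 0 0, M 0 1, N 0 0, N 1 0, by linear_combination h00⟩
  refine ⟨⟨fun h1 => ?_, fun h2 => ?_⟩, ⟨fun h2 => aux23 a b c d h2, ?_⟩, ⟨?_, ?_⟩⟩
  · obtain ⟨e, f, x, y, hef⟩ := h13 h1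
    exact aux32 a b c d e f x y hef
  · obtain ⟨e, f, x, y, hef⟩ := aux23 a b c d h2
    exact aux31 a b c d e f x y hef
  · rintro ⟨e, f, x, y, hef⟩
    exact aux32 a b c d e f x y hef
  · rintro ⟨e, f, x, y, hef⟩
    refine ⟨e * x, e * y, f * x, f * y, by linear_combination hef,
      e, f, x, y, ?_, ?_, ?_, ?_⟩ <;> rfl
  · rintro ⟨x, y, z, w, hxw, l, m, n, q, h1, h2, h3, h4⟩
    simp only [Matrix.of_apply] at h1 h2 h3 h4
    refine ⟨l, m, n, q, ?_⟩
    have e1 : x = l * n := by simpa using h1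
    have e2 : y = l * q := by simpa using h2
    have e3 : z = m * n := by simpa using h3
    have e4 : w = m * q := by simpa using h4
    rw [e1, e2, e3, e4] at hxw
    linear_combination hxw
end

section
/- Let R be a commutative ring, let (a,b,c,d) ∈ R⁴ be unimodular, set A = [[a,b],[c,d]] ∈ M₂(R) and δ = a·d − b·c. The following are equivalent: (1) there exists (x,y,z,w) ∈ R⁴ with a·x + b·y + c·z + d·w = 1 and x·w = y·z; (2) there exists a unimodular B ∈ M₂(R) such that A + δ·B is unimodular and det B = det(A + δ·B) = 0; (3) there exists a unimodular C ∈ M₂(R) with det C = 0 and all entries of C − A in the ideal generated by δ; (4) there exists B ∈ M₂(R) with det B = 0 and det(δ·B + A) = 0. -/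
section Aux

variable {R : Type*} [CommRing R]

private lemma ofE00 (x1 x2 x3 x4 : R) :
    (Matrix.of ![![x1, x2], ![x3, x4]] : Matrix (Fin 2) (Fin 2) R) 0 0 = x1 := rfl
private lemma ofE01 (x1 x2 x3 x4 : R) :
    (Matrix.of ![![x1, x2], ![x3, x4]] : Matrix (Fin 2) (Fin 2) R) 0 1 = x2 := rfl
private lemma ofE10 (x1 x2 x3 x4 : R) :
    (Matrix.of ![![x1, x2], ![x3, x4]] : Matrix (Fin 2) (Fin 2) R) 1 0 = x3 := rfl
private lemma ofE11 (x1 x2 x3 x4 : R) :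
    (Matrix.of ![![x1, x2], ![x3, x4]] : Matrix (Fin 2) (Fin 2) R) 1 1 = x4 := rfl

/-- (5) → (6). -/
private lemma imp56 (a b c d x y z w : R)
    (h5 : a * x + b * y + c * z + d * w = 1) (hxw : x * w = y * z) :
    ∃ B : Matrix (Fin 2) (Fin 2) R, MatUnimodular B ∧
      MatUnimodular (Matrix.of ![![a, b], ![c, d]] + (a * d - b * c) • B) ∧
      B.det = 0 ∧ (Matrix.of ![![a, b], ![c, d]] + (a * d - b * c) • B).det = 0 := by
  refine ⟨Matrix.of ![![-w, z], ![y, -x]], ⟨-d, c, b, -a, ?_⟩, ⟨x, y, z, w, ?_⟩, ?_, ?_⟩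
  · simp only [ofE00, ofE01, ofE10, ofE11]
    linear_combination h5
  · simp only [Matrix.add_apply, Matrix.smul_apply, smul_eq_mul,
      ofE00, ofE01, ofE10, ofE11]
    linear_combination h5 - 2 * (a * d - b * c) * hxw
  · rw [Matrix.det_fin_two]
    simp only [ofE00, ofE01, ofE10, ofE11]
    linear_combination hxw
  · rw [Matrix.det_fin_two]
    simp only [Matrix.add_apply, Matrix.smul_apply, smul_eq_mul,
      ofE00, ofE01, ofE10, ofE11]
    linear_combination (-(a * d - b * c)) * h5 + (a * d - b * c) ^ 2 * hxw

/-- (6) → (7). -/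
private lemma imp67 (a b c d : R)
    (h : ∃ B : Matrix (Fin 2) (Fin 2) R, MatUnimodular B ∧
      MatUnimodular (Matrix.of ![![a, b], ![c, d]] + (a * d - b * c) • B) ∧
      B.det = 0 ∧ (Matrix.of ![![a, b], ![c, d]] + (a * d - b * c) • B).det = 0) :
    ∃ C : Matrix (Fin 2) (Fin 2) R, MatUnimodular C ∧ C.det = 0 ∧
      ∀ i j : Fin 2, C i j - (Matrix.of ![![a, b], ![c, d]]) i j ∈
        Ideal.span {a * d - b * c} := by
  obtain ⟨B, -, h2, -, h4⟩ := h
  refine ⟨Matrix.of ![![a, b], ![c, d]] + (a * d - b * c) • B, h2, h4, fun i j => ?_⟩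
  refine Ideal.mem_span_singleton.mpr ⟨B i j, ?_⟩
  simp only [Matrix.add_apply, Matrix.smul_apply, smul_eq_mul]
  ring

/-- (7) → (8). -/
private lemma imp78 (a b c d : R)
    (h : ∃ C : Matrix (Fin 2) (Fin 2) R, MatUnimodular C ∧ C.det = 0 ∧
      ∀ i j : Fin 2, C i j - (Matrix.of ![![a, b], ![c, d]]) i j ∈
        Ideal.span {a * d - b * c}) :
    ∃ B : Matrix (Fin 2) (Fin 2) R, B.det = 0 ∧
      ((a * d - b * c) • B + Matrix.of ![![a, b], ![c, d]]).det = 0 := by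
  obtain ⟨C, ⟨P, Q, Rr, S, hU⟩, hdC, hmem⟩ := h
  have hdC2 : C 0 0 * C 1 1 - C 0 1 * C 1 0 = 0 := by
    rw [Matrix.det_fin_two] at hdC; exact hdC
  obtain ⟨t1, ht1⟩ := Ideal.mem_span_singleton.mp (hmem 0 0)
  obtain ⟨t2, ht2⟩ := Ideal.mem_span_singleton.mp (hmem 0 1)
  obtain ⟨t3, ht3⟩ := Ideal.mem_span_singleton.mp (hmem 1 0)
  obtain ⟨t4, ht4⟩ := Ideal.mem_span_singleton.mp (hmem 1 1)
  rw [ofE00] at ht1; rw [ofE01] at ht2; rw [ofE10] at ht3; rw [ofE11] at ht4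
  have hc1 : C 0 0 = a + (a * d - b * c) * t1 := by linear_combination ht1
  have hc2 : C 0 1 = b + (a * d - b * c) * t2 := by linear_combination ht2
  have hc3 : C 1 0 = c + (a * d - b * c) * t3 := by linear_combination ht3
  have hc4 : C 1 1 = d + (a * d - b * c) * t4 := by linear_combination ht4
  set Ymat : Matrix (Fin 2) (Fin 2) R := Matrix.of ![![P, Rr], ![Q, S]] with hYmat
  set Dmat : Matrix (Fin 2) (Fin 2) R := Matrix.of ![![t1, t2], ![t3, t4]] with hDmat
  refine ⟨(1 - C * Ymat) * Dmat, ?_, ?_⟩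
  · rw [Matrix.det_mul]
    have h0 : (1 - C * Ymat).det = 0 := by
      rw [Matrix.det_fin_two]
      simp only [Matrix.sub_apply, Matrix.mul_apply, Fin.sum_univ_two, hYmat,
        Matrix.one_apply, ofE00, ofE01, ofE10, ofE11]
      norm_num
      linear_combination (-(1 : R)) * hU + (P * S - Rr * Q) * hdC2
    rw [h0, zero_mul]
  · have hEq : (a * d - b * c) • ((1 - C * Ymat) * Dmat) + Matrix.of ![![a, b], ![c, d]]
        = C * (1 - (a * d - b * c) • (Ymat * Dmat)) := by
      ext i j
      fin_cases i <;> fin_cases j <;>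
        simp only [Matrix.add_apply, Matrix.smul_apply, smul_eq_mul, Matrix.sub_apply,
          Matrix.mul_apply, Fin.sum_univ_two, hYmat, hDmat, Matrix.one_apply,
          ofE00, ofE01, ofE10, ofE11] <;> norm_num
      · linear_combination (-(1 : R)) * hc1
      · linear_combination (-(1 : R)) * hc2
      · linear_combination (-(1 : R)) * hc3
      · linear_combination (-(1 : R)) * hc4
    rw [hEq, Matrix.det_mul, hdC, zero_mul]

/-- (8) → (7). -/
private lemma imp87 (a b c d x0 y0 z0 w0 : R)
    (hY0 : a * x0 + b * y0 + c * z0 + d * w0 = 1)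
    (h : ∃ B : Matrix (Fin 2) (Fin 2) R, B.det = 0 ∧
      ((a * d - b * c) • B + Matrix.of ![![a, b], ![c, d]]).det = 0) :
    ∃ C : Matrix (Fin 2) (Fin 2) R, MatUnimodular C ∧ C.det = 0 ∧
      ∀ i j : Fin 2, C i j - (Matrix.of ![![a, b], ![c, d]]) i j ∈
        Ideal.span {a * d - b * c} := by
  obtain ⟨B, hdB, hdN⟩ := h
  have hdB2 : B 0 0 * B 1 1 - B 0 1 * B 1 0 = 0 := by
    rw [Matrix.det_fin_two] at hdB; exact hdB
  have hdN2 : ((a * d - b * c) * B 0 0 + a) * ((a * d - b * c) * B 1 1 + d)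
      - ((a * d - b * c) * B 0 1 + b) * ((a * d - b * c) * B 1 0 + c) = 0 := by
    rw [Matrix.det_fin_two] at hdN
    simp only [Matrix.add_apply, Matrix.smul_apply, smul_eq_mul,
      ofE00, ofE01, ofE10, ofE11] at hdN
    linear_combination hdN
  refine ⟨(a * d - b * c) • B + Matrix.of ![![a, b], ![c, d]], ?_, hdN, fun i j => ?_⟩
  · refine ⟨x0 + (a * d - b * c) * (B 0 0 * x0 + B 0 1 * y0 + B 1 0 * z0 + B 1 1 * w0) * B 1 1,
      y0 - (a * d - b * c) * (B 0 0 * x0 + B 0 1 * y0 + B 1 0 * z0 + B 1 1 * w0) * B 1 0,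
      z0 - (a * d - b * c) * (B 0 0 * x0 + B 0 1 * y0 + B 1 0 * z0 + B 1 1 * w0) * B 0 1,
      w0 + (a * d - b * c) * (B 0 0 * x0 + B 0 1 * y0 + B 1 0 * z0 + B 1 1 * w0) * B 0 0, ?_⟩
    simp only [Matrix.add_apply, Matrix.smul_apply, smul_eq_mul,
      ofE00, ofE01, ofE10, ofE11]
    linear_combination hY0
      + (B 0 0 * x0 + B 0 1 * y0 + B 1 0 * z0 + B 1 1 * w0) * hdN2
      + (B 0 0 * x0 + B 0 1 * y0 + B 1 0 * z0 + B 1 1 * w0) * (a * d - b * c) ^ 2 * hdB2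
  · refine Ideal.mem_span_singleton.mpr ⟨B i j, ?_⟩
    simp only [Matrix.add_apply, Matrix.smul_apply, smul_eq_mul]
    ring

/-- (8) → (5). -/
private lemma imp85 (a b c d x0 y0 z0 w0 : R)
    (hY0 : a * x0 + b * y0 + c * z0 + d * w0 = 1)
    (h : ∃ B : Matrix (Fin 2) (Fin 2) R, B.det = 0 ∧
      ((a * d - b * c) • B + Matrix.of ![![a, b], ![c, d]]).det = 0) :
    ∃ x y z w : R, a * x + b * y + c * z + d * w = 1 ∧ x * w = y * z := by
  obtain ⟨B, hdB, hdN⟩ := h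
  obtain ⟨e, f, g, hh, he, hf, hg, hhh⟩ :
      ∃ e f g hh : R, B 0 0 = e ∧ B 0 1 = f ∧ B 1 0 = g ∧ B 1 1 = hh :=
    ⟨_, _, _, _, rfl, rfl, rfl, rfl⟩
  have hdB2 : e * hh - f * g = 0 := by
    rw [Matrix.det_fin_two, he, hf, hg, hhh] at hdB; exact hdB
  have hdN2 : ((a * d - b * c) * e + a) * ((a * d - b * c) * hh + d)
      - ((a * d - b * c) * f + b) * ((a * d - b * c) * g + c) = 0 := by
    rw [Matrix.det_fin_two] at hdN
    simp only [Matrix.add_apply, Matrix.smul_apply, smul_eq_mul,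
      ofE00, ofE01, ofE10, ofE11, he, hf, hg, hhh] at hdN
    linear_combination hdN
  -- δ·(1 + tr(adj A · B)) = 0
  have hsig : (a * d - b * c) * (1 + (d * e + a * hh - b * g - c * f)) = 0 := by
    linear_combination hdN2 - (a * d - b * c) ^ 2 * hdB2
  -- Y1 := Y0 - tr(B·Y0) · adj A ;  then tr(N · Y1) = 1
  obtain ⟨p1, p2, p3, p4, hp1, hp2, hp3, hp4⟩ :
      ∃ p1 p2 p3 p4 : R,
        p1 = x0 - (e * x0 + f * y0 + g * z0 + hh * w0) * d ∧
        p2 = z0 + (e * x0 + f * y0 + g * z0 + hh * w0) * b ∧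
        p3 = y0 + (e * x0 + f * y0 + g * z0 + hh * w0) * c ∧
        p4 = w0 - (e * x0 + f * y0 + g * z0 + hh * w0) * a :=
    ⟨_, _, _, _, rfl, rfl, rfl, rfl⟩
  have F2 : (a + (a * d - b * c) * e) * p1 + (b + (a * d - b * c) * f) * p3
      + (c + (a * d - b * c) * g) * p2 + (d + (a * d - b * c) * hh) * p4 = 1 := by
    rw [hp1, hp2, hp3, hp4]
    linear_combination hY0 - (e * x0 + f * y0 + g * z0 + hh * w0) * hsig
  -- Y := Y1 · N · Y1
  obtain ⟨y1, y2, y3, y4, hy1, hy2, hy3, hy4⟩ :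
      ∃ y1 y2 y3 y4 : R,
        y1 = (p1 * (a + (a * d - b * c) * e) + p2 * (c + (a * d - b * c) * g)) * p1
            + (p1 * (b + (a * d - b * c) * f) + p2 * (d + (a * d - b * c) * hh)) * p3 ∧
        y2 = (p1 * (a + (a * d - b * c) * e) + p2 * (c + (a * d - b * c) * g)) * p2
            + (p1 * (b + (a * d - b * c) * f) + p2 * (d + (a * d - b * c) * hh)) * p4 ∧
        y3 = (p3 * (a + (a * d - b * c) * e) + p4 * (c + (a * d - b * c) * g)) * p1
            + (p3 * (b + (a * d - b * c) * f) + p4 * (d + (a * d - b * c) * hh)) * p3 ∧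
        y4 = (p3 * (a + (a * d - b * c) * e) + p4 * (c + (a * d - b * c) * g)) * p2
            + (p3 * (b + (a * d - b * c) * f) + p4 * (d + (a * d - b * c) * hh)) * p4 :=
    ⟨_, _, _, _, rfl, rfl, rfl, rfl⟩
  -- tr(N·Y) = 1
  have F5 : (a + (a * d - b * c) * e) * y1 + (b + (a * d - b * c) * f) * y3
      + (c + (a * d - b * c) * g) * y2 + (d + (a * d - b * c) * hh) * y4 = 1 := by
    rw [hy1, hy2, hy3, hy4]
    linear_combination
      ((a + (a * d - b * c) * e) * p1 + (b + (a * d - b * c) * f) * p3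
        + (c + (a * d - b * c) * g) * p2 + (d + (a * d - b * c) * hh) * p4 + 1) * F2
      - 2 * (p1 * p4 - p2 * p3) * hdN2
  -- det Y = 0
  have F6 : y1 * y4 - y2 * y3 = 0 := by
    rw [hy1, hy2, hy3, hy4]
    linear_combination (p1 * p4 - p2 * p3) ^ 2 * hdN2
  -- X := Y + adj N · B · Y
  obtain ⟨x1, x2, x3, x4, hx1, hx2, hx3, hx4⟩ :
      ∃ x1 x2 x3 x4 : R,
        x1 = y1 + ((d + (a * d - b * c) * hh) * (e * y1 + f * y3)
            - (b + (a * d - b * c) * f) * (g * y1 + hh * y3)) ∧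
        x2 = y2 + ((d + (a * d - b * c) * hh) * (e * y2 + f * y4)
            - (b + (a * d - b * c) * f) * (g * y2 + hh * y4)) ∧
        x3 = y3 + (-(c + (a * d - b * c) * g) * (e * y1 + f * y3)
            + (a + (a * d - b * c) * e) * (g * y1 + hh * y3)) ∧
        x4 = y4 + (-(c + (a * d - b * c) * g) * (e * y2 + f * y4)
            + (a + (a * d - b * c) * e) * (g * y2 + hh * y4)) :=
    ⟨_, _, _, _, rfl, rfl, rfl, rfl⟩
  have T1 : a * x1 + b * x3 + c * x2 + d * x4 = 1 := by
    rw [hx1, hx2, hx3, hx4]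
    linear_combination F5
      + ((a * d - b * c) * (a * y1 + b * y3 + c * y2 + d * y4)) * hdB2
  have T2 : x1 * x4 - x2 * x3 = 0 := by
    rw [hx1, hx2, hx3, hx4]
    linear_combination
      ((1 + ((d + (a * d - b * c) * hh) * e - (b + (a * d - b * c) * f) * g))
        * (1 + ((a + (a * d - b * c) * e) * hh - (c + (a * d - b * c) * g) * f))
        - ((d + (a * d - b * c) * hh) * f - (b + (a * d - b * c) * f) * hh)
        * ((a + (a * d - b * c) * e) * g - (c + (a * d - b * c) * g) * e)) * F6
  exact ⟨x1, x3, x2, x4, T1, by linear_combination T2⟩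

end Aux

/-- For a unimodular quadruple `(a,b,c,d)` with matrix `A = [[a,b],[c,d]]` and
`δ = a*d - b*c`, the four statements ⑤, ⑥, ⑦, ⑧ of the paper are equivalent. -/
theorem four_equivalent_statements_5678 (R : Type*) [CommRing R] (a b c d : R)
    (hunim : ∃ x y z w : R, a * x + b * y + c * z + d * w = 1) :
    ((∃ x y z w : R, a * x + b * y + c * z + d * w = 1 ∧ x * w = y * z) ↔
      (∃ B : Matrix (Fin 2) (Fin 2) R, MatUnimodular B ∧
        MatUnimodular (Matrix.of ![![a, b], ![c, d]] + (a * d - b * c) • B) ∧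
        B.det = 0 ∧ (Matrix.of ![![a, b], ![c, d]] + (a * d - b * c) • B).det = 0)) ∧
    ((∃ B : Matrix (Fin 2) (Fin 2) R, MatUnimodular B ∧
        MatUnimodular (Matrix.of ![![a, b], ![c, d]] + (a * d - b * c) • B) ∧
        B.det = 0 ∧ (Matrix.of ![![a, b], ![c, d]] + (a * d - b * c) • B).det = 0) ↔
      (∃ C : Matrix (Fin 2) (Fin 2) R, MatUnimodular C ∧ C.det = 0 ∧
        ∀ i j : Fin 2, C i j - (Matrix.of ![![a, b], ![c, d]]) i j ∈
          Ideal.span {a * d - b * c})) ∧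
    ((∃ C : Matrix (Fin 2) (Fin 2) R, MatUnimodular C ∧ C.det = 0 ∧
        ∀ i j : Fin 2, C i j - (Matrix.of ![![a, b], ![c, d]]) i j ∈
          Ideal.span {a * d - b * c}) ↔
      (∃ B : Matrix (Fin 2) (Fin 2) R, B.det = 0 ∧
        ((a * d - b * c) • B + Matrix.of ![![a, b], ![c, d]]).det = 0)) := by
  obtain ⟨x0, y0, z0, w0, hY0⟩ := hunim
  refine ⟨⟨?_, ?_⟩, ⟨?_, ?_⟩, ⟨?_, ?_⟩⟩
  · rintro ⟨x, y, z, w, h1, h2⟩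
    exact imp56 a b c d x y z w h1 h2
  · intro h6
    exact imp85 a b c d x0 y0 z0 w0 hY0 (imp78 a b c d (imp67 a b c d h6))
  · exact imp67 a b c d
  · intro h7
    obtain ⟨x, y, z, w, h1, h2⟩ := imp85 a b c d x0 y0 z0 w0 hY0 (imp78 a b c d h7)
    exact imp56 a b c d x y z w h1 h2
  · exact imp78 a b c d
  · exact imp87 a b c d x0 y0 z0 w0 hY0
end

section
/- Let R be a commutative ring and let A ∈ M₂(R) be unimodular with det A = 0. Then A is simply extendable if and only if A is non-full. -/
/-- A unimodular 2×2 matrix of determinant 0 is simply extendable iff it is non-full. -/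
theorem simplyExtendable_iff_nonFull_of_det_zero {R : Type*} [CommRing R]
    (A : Matrix (Fin 2) (Fin 2) R) (hA : MatUnimodular A) (hdet : A.det = 0) :
    SimplyExtendable A ↔ NonFull A := by
  rw [Matrix.det_fin_two] at hdet
  constructor
  · rintro ⟨B, hdetB, hB2, hB22⟩
    have h00 := hB2 0 0
    have h01 := hB2 0 1
    have h10 := hB2 1 0
    have h11 := hB2 1 1
    simp only [Fin.castSucc_zero, Fin.castSucc_one] at h00 h01 h10 h11
    rw [Matrix.det_fin_three, h00, h01, h10, h11, hB22] at hdetB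
    refine ⟨A 0 0 * B 2 1 - A 0 1 * B 2 0, A 1 0 * B 2 1 - A 1 1 * B 2 0,
      B 0 2 * A 1 0 - B 1 2 * A 0 0, B 0 2 * A 1 1 - B 1 2 * A 0 1, ?_, ?_, ?_, ?_⟩
    · linear_combination (-(A 0 0)) * hdetB + (-(B 0 2) * B 2 0) * hdet
    · linear_combination (-(A 0 1)) * hdetB + (-(B 0 2) * B 2 1) * hdet
    · linear_combination (-(A 1 0)) * hdetB + (-(B 1 2) * B 2 0) * hdet
    · linear_combination (-(A 1 1)) * hdetB + (-(B 1 2) * B 2 1) * hdet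
  · rintro ⟨l, m, n, q, hln, hlq, hmn, hmq⟩
    obtain ⟨p, q₀, r, s, hu⟩ := hA
    rw [hln, hlq, hmn, hmq] at hu
    refine ⟨!![l * n, l * q, r * n + s * q;
               m * n, m * q, -(p * n + q₀ * q);
               -(q₀ * l + s * m), p * l + r * m, 0], ?_, ?_, ?_⟩
    · simp [Matrix.det_fin_three]
      linear_combination (p * (l * n) + q₀ * (l * q) + r * (m * n) + s * (m * q) + 1) * hu
    · intro i j
      fin_cases i <;> fin_cases j <;>
        simp only [Fin.castSucc_zero, Fin.castSucc_one, Fin.mk_zero, Fin.mk_one,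
          Matrix.cons_val', Matrix.cons_val_zero, Matrix.cons_val_one,
          Matrix.head_cons, Matrix.empty_val', Matrix.cons_val_fin_one]
      · exact hln.symm
      · exact hlq.symm
      · exact hmn.symm
      · exact hmq.symm
    · rfl
end

section
/- Every commutative semilocal ring (a commutative ring with only finitely many maximal ideals) is an SE₂ ring, i.e., every unimodular 2×2 matrix over it is simply extendable. -/
/-- Every commutative semilocal ring (finitely many maximal ideals) is an SE₂ ring. -/
theorem semilocal_is_se2 (R : Type*) [CommRing R]
    (hsl : {I : Ideal R | I.IsMaximal}.Finite) :
    ∀ A : Matrix (Fin 2) (Fin 2) R, MatUnimodular A → SimplyExtendable A := by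
  classical
  intro A hA
  obtain ⟨p, q, r, s, hpqrs⟩ := hA
  set a := A 0 0 with ha
  set b := A 0 1 with hb
  set c := A 1 0 with hc
  set d := A 1 1 with hd
  set S : Finset (Ideal R) := hsl.toFinset with hS
  have hmax : ∀ m ∈ S, m.IsMaximal := fun m hm => hsl.mem_toFinset.mp hm
  set S₁ : Finset (Ideal R) := S.filter (fun m => a ∉ m ∨ c ∉ m) with hS₁
  set S₂ : Finset (Ideal R) := S.filter (fun m => ¬ (a ∉ m ∨ c ∉ m)) with hS₂
  set I : Ideal R := S₁.inf id with hI
  set J : Ideal R := S₂.inf id with hJ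
  have hIJ : I ⊔ J = ⊤ := by
    by_contra h
    obtain ⟨m, hmmax, hm⟩ := Ideal.exists_le_maximal _ h
    have hIm : I ≤ m := le_trans le_sup_left hm
    have hJm : J ≤ m := le_trans le_sup_right hm
    obtain ⟨m₁, hm₁, hle₁⟩ := (Ideal.IsPrime.inf_le' hmmax.isPrime).mp hIm
    obtain ⟨m₂, hm₂, hle₂⟩ := (Ideal.IsPrime.inf_le' hmmax.isPrime).mp hJm
    have he₁ : m₁ = m := (hmax m₁ (Finset.mem_filter.mp hm₁).1).eq_of_le hmmax.ne_top hle₁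
    have he₂ : m₂ = m := (hmax m₂ (Finset.mem_filter.mp hm₂).1).eq_of_le hmmax.ne_top hle₂
    have h1 := (Finset.mem_filter.mp hm₁).2
    have h2 := (Finset.mem_filter.mp hm₂).2
    rw [he₁] at h1
    rw [he₂] at h2
    exact h2 h1
  have h1mem : (1 : R) ∈ I ⊔ J := by rw [hIJ]; exact Submodule.mem_top
  obtain ⟨i, hi, j, hj, hij⟩ := Submodule.mem_sup.mp h1mem
  set α := a * j - b * (j - 1) with hα
  set β := c * j - d * (j - 1) with hβ
  have key : ∀ m ∈ S, α ∉ m ∨ β ∉ m := by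
    intro m hm
    have hmne : (1 : R) ∉ m := fun h1 => (hmax m hm).ne_top (Ideal.eq_top_iff_one m |>.mpr h1)
    by_cases hcase : a ∉ m ∨ c ∉ m
    · have hmS₁ : m ∈ S₁ := Finset.mem_filter.mpr ⟨hm, hcase⟩
      have hIme : I ≤ m := Finset.inf_le hmS₁
      have him : i ∈ m := hIme hi
      have hj1 : j - 1 ∈ m := by
        have : j - 1 = -i := by linear_combination hij
        rw [this]; exact m.neg_mem him
      have hαa : α - a ∈ m := by
        have : α - a = (a - b) * (j - 1) := by ring
        rw [this]; exact m.mul_mem_left _ hj1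
      have hβc : β - c ∈ m := by
        have : β - c = (c - d) * (j - 1) := by ring
        rw [this]; exact m.mul_mem_left _ hj1
      rcases hcase with h | h
      · exact Or.inl (fun hαm => h (by simpa using m.sub_mem hαm hαa))
      · exact Or.inr (fun hβm => h (by simpa using m.sub_mem hβm hβc))
    · push_neg at hcase
      obtain ⟨ham, hcm⟩ := hcase
      have hmS₂ : m ∈ S₂ := Finset.mem_filter.mpr ⟨hm, by push_neg; exact ⟨ham, hcm⟩⟩
      have hJme : J ≤ m := Finset.inf_le hmS₂
      have hjm : j ∈ m := hJme hj
      have hbd : b ∉ m ∨ d ∉ m := by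
        by_contra hco
        push_neg at hco
        apply hmne
        have : (1 : R) = p * a + q * b + r * c + s * d := hpqrs.symm
        rw [this]
        exact m.add_mem (m.add_mem (m.add_mem (m.mul_mem_left _ ham)
          (m.mul_mem_left _ hco.1)) (m.mul_mem_left _ hcm)) (m.mul_mem_left _ hco.2)
      have hαb : α - b ∈ m := by
        have : α - b = a * j - b * j := by ring
        rw [this]; exact m.sub_mem (m.mul_mem_left _ hjm) (m.mul_mem_left _ hjm)
      have hβd : β - d ∈ m := by
        have : β - d = c * j - d * j := by ring
        rw [this]; exact m.sub_mem (m.mul_mem_left _ hjm) (m.mul_mem_left _ hjm)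
      rcases hbd with h | h
      · exact Or.inl (fun hαm => h (by simpa using m.sub_mem hαm hαb))
      · exact Or.inr (fun hβm => h (by simpa using m.sub_mem hβm hβd))
  have hspan : Ideal.span ({α, β} : Set R) = ⊤ := by
    by_contra h
    obtain ⟨m, hmmax, hm⟩ := Ideal.exists_le_maximal _ h
    have hmS : m ∈ S := hsl.mem_toFinset.mpr hmmax
    have hαm : α ∈ m := hm (Ideal.subset_span (by simp))
    have hβm : β ∈ m := hm (Ideal.subset_span (by simp))
    rcases key m hmS with h' | h' <;> exact h' ‹_›
  obtain ⟨x, y, hxy⟩ := Ideal.mem_span_pair.mp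
    (by rw [hspan]; exact Submodule.mem_top : (1 : R) ∈ Ideal.span ({α, β} : Set R))
  refine ⟨!![a, b, y; c, d, -x; j - 1, j, 0], ?_, ?_, ?_⟩
  · rw [Matrix.det_fin_three]
    simp only [Matrix.cons_val', Matrix.cons_val_zero, Matrix.cons_val_one, Matrix.head_cons,
      Matrix.cons_val_two, Matrix.tail_cons, Matrix.empty_val', Matrix.cons_val_fin_one,
      Matrix.head_fin_const, Matrix.of_apply, Matrix.cons_val_fin_one, Matrix.head_fin_const]
    linear_combination hxy
  · intro i' j'
    fin_cases i' <;> fin_cases j' <;> simp [ha, hb, hc, hd]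
  · simp
end

section
/- Let R be a commutative ring and let (a,b,c,d) ∈ R⁴ be unimodular; set A = [[a,b],[c,d]] ∈ M₂(R). Then: (1) A is extendable if and only if there exists (e,f) ∈ R² such that the triple (a·e + c·f, b·e + d·f, a·d − b·c) is unimodular; (2) A is simply extendable if and only if there exists such a pair (e,f) which is moreover unimodular; (3) if R has stable range at most 2, then A is extendable if and only if A is simply extendable. -/
/-- For a unimodular quadruple `(a,b,c,d)` with matrix `A = [[a,b],[c,d]]`:
(1) `A` is extendable iff `(ae+cf, be+df, ad-bc)` is unimodular for some `(e,f)`;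
(2) `A` is simply extendable iff we may moreover take `(e,f)` unimodular;
(3) if `R` has stable range at most 2, then `A` is extendable iff simply extendable. -/
theorem extendable_criterion (R : Type*) [CommRing R] (a b c d : R)
    (hunim : ∃ x y z w : R, a * x + b * y + c * z + d * w = 1) :
    (Extendable (Matrix.of ![![a, b], ![c, d]]) ↔
      ∃ e f : R, ∃ x y z : R,
        (a * e + c * f) * x + (b * e + d * f) * y + (a * d - b * c) * z = 1) ∧
    (SimplyExtendable (Matrix.of ![![a, b], ![c, d]]) ↔
      ∃ e f : R, (∃ p q : R, e * p + f * q = 1) ∧ ∃ x y z : R,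
        (a * e + c * f) * x + (b * e + d * f) * y + (a * d - b * c) * z = 1) ∧
    ((∀ a₁ a₂ b' : R, (∃ x y z : R, a₁ * x + a₂ * y + b' * z = 1) →
        ∃ r₁ r₂ : R, ∃ x y : R, (a₁ + r₁ * b') * x + (a₂ + r₂ * b') * y = 1) →
      (Extendable (Matrix.of ![![a, b], ![c, d]]) ↔
        SimplyExtendable (Matrix.of ![![a, b], ![c, d]]))) := by
  have hE : Extendable (Matrix.of ![![a, b], ![c, d]]) ↔
      ∃ e f : R, ∃ x y z : R,
        (a * e + c * f) * x + (b * e + d * f) * y + (a * d - b * c) * z = 1 := by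
    constructor
    · rintro ⟨B, hdet, hB⟩
      have h00 := hB 0 0
      have h01 := hB 0 1
      have h10 := hB 1 0
      have h11 := hB 1 1
      simp only [Fin.castSucc_zero, Fin.castSucc_one, Matrix.of_apply, Matrix.cons_val_zero, Matrix.cons_val_one, Matrix.head_cons] at h00 h01 h10 h11
      rw [Matrix.det_fin_three] at hdet
      rw [h00, h01, h10, h11] at hdet
      exact ⟨-B 1 2, B 0 2, B 2 1, -(B 2 0), B 2 2, by linear_combination hdet⟩
    · rintro ⟨e, f, x, y, z, h1⟩
      refine ⟨!![a, b, f; c, d, -e; -y, x, z], ?_, ?_⟩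
      · rw [Matrix.det_fin_three]
        simp only [Matrix.cons_val', Matrix.cons_val_zero, Matrix.cons_val_one,
          Matrix.head_cons, Matrix.head_fin_const, Matrix.cons_val_fin_one,
          Matrix.of_apply, Matrix.cons_val_two, Matrix.tail_cons, Matrix.empty_val',
          Matrix.cons_val_two]
        linear_combination h1
      · intro i j
        fin_cases i <;> fin_cases j <;> rfl
  have hS : SimplyExtendable (Matrix.of ![![a, b], ![c, d]]) ↔
      ∃ e f : R, (∃ p q : R, e * p + f * q = 1) ∧ ∃ x y z : R,
        (a * e + c * f) * x + (b * e + d * f) * y + (a * d - b * c) * z = 1 := by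
    constructor
    · rintro ⟨B, hdet, hB, h22⟩
      have h00 := hB 0 0
      have h01 := hB 0 1
      have h10 := hB 1 0
      have h11 := hB 1 1
      simp only [Fin.castSucc_zero, Fin.castSucc_one, Matrix.of_apply, Matrix.cons_val_zero, Matrix.cons_val_one, Matrix.head_cons] at h00 h01 h10 h11
      rw [Matrix.det_fin_three] at hdet
      rw [h00, h01, h10, h11, h22] at hdet
      refine ⟨-B 1 2, B 0 2, ⟨a * B 2 1 - b * B 2 0, c * B 2 1 - d * B 2 0, by
        linear_combination hdet⟩, B 2 1, -(B 2 0), 0, by linear_combination hdet⟩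
    · rintro ⟨e, f, ⟨p, q, hpq⟩, x, y, z, h1⟩
      refine ⟨!![a, b, f; c, d, -e;
        -(y + z * (a * q - c * p)), x + z * (d * p - b * q), 0], ?_, ?_, ?_⟩
      · rw [Matrix.det_fin_three]
        simp only [Matrix.cons_val', Matrix.cons_val_zero, Matrix.cons_val_one,
          Matrix.head_cons, Matrix.head_fin_const, Matrix.cons_val_fin_one,
          Matrix.of_apply, Matrix.cons_val_two, Matrix.tail_cons, Matrix.empty_val']
        linear_combination h1 + z * (a * d - b * c) * hpq
      · intro i j
        fin_cases i <;> fin_cases j <;> rfl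
      · rfl
  refine ⟨hE, hS, fun hsr => ?_⟩
  constructor
  · intro h
    obtain ⟨e, f, x, y, z, h1⟩ := hE.mp h
    obtain ⟨r₁, r₂, x', y', h2⟩ :=
      hsr (a * e + c * f) (b * e + d * f) (a * d - b * c) ⟨x, y, z, h1⟩
    refine hS.mpr ⟨e + r₁ * d - r₂ * c, f - r₁ * b + r₂ * a,
      ⟨a * x' + b * y', c * x' + d * y', by linear_combination h2⟩,
      x', y', 0, by linear_combination h2⟩
  · rintro ⟨B, hdet, hB, _⟩
    exact ⟨B, hdet, hB⟩
end

section
/- Let R be a commutative ring and let A = [[a,b],[b,c]] ∈ M₂(R) be a symmetric unimodular matrix with det A = 0 (i.e., a·c = b²). (1) If there exists (e,f) ∈ R² such that a·e² − c·f² is a unit of R, then A is simply extendable. (2) Conversely, if R has characteristic 2 and A is simply extendable, then there exists (e,f) ∈ R² such that a·e² − c·f² is a unit of R. -/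
/-!
For (1), the unit `u = a e² - c f²` splits as `u = e (a e - b f) + f (b e - c f)`, which is the
cofactor expansion of the determinant of `[[a, b, f], [b, c, -e], [f, e, 0]]`; scaling the third
column by `u⁻¹` gives determinant `1`.

For (2), write the extension as `[[a, b, x], [b, c, y], [z, w, 0]]`, so that its determinant is
`x (b w - c z) - y (a w - b z) = 1`. In characteristic `2` squaring is additive, and with `a c = b²`
the square of that determinant factors as `(a w² + c z²) (c x² + a y²)`.
-/

section

variable {R : Type*} [CommRing R]

theorem det_fin_three_zero_corner (a b c d x y z w : R) :
    !![a, b, x; d, c, y; z, w, 0].det = x * (d * w - c * z) - y * (a * w - b * z) := by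
  rw [Matrix.det_fin_three]
  simp only [Matrix.of_apply, Matrix.cons_val', Matrix.cons_val_zero, Matrix.cons_val_one,
    Matrix.cons_val_two, Matrix.head_cons, Matrix.tail_cons, Matrix.empty_val',
    Matrix.cons_val_fin_one, Matrix.head_fin_const]
  ring

theorem simplyExtendable_of_isUnit {a b c e f : R} (h : IsUnit (a * e ^ 2 - c * f ^ 2)) :
    SimplyExtendable !![a, b; b, c] := by
  obtain ⟨v, hv⟩ := h.exists_right_inv
  refine ⟨!![a, b, v * f; b, c, -(v * e); f, e, 0], ?_, fun i j => ?_, rfl⟩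
  · rw [det_fin_three_zero_corner]
    linear_combination hv
  · fin_cases i <;> fin_cases j <;> rfl

theorem CharTwo.sq_add_eq_mul_of_mul_eq [CharP R 2] {a b c : R} (hdet : a * c = b * b)
    (x y z w : R) :
    (x * (b * w + c * z) + y * (a * w + b * z)) ^ 2 =
      (a * w ^ 2 + c * z ^ 2) * (c * x ^ 2 + a * y ^ 2) := by
  simp only [CharTwo.add_sq, mul_pow]
  linear_combination -(w ^ 2 * x ^ 2 + z ^ 2 * y ^ 2) * hdet

theorem exists_isUnit_of_simplyExtendable [CharP R 2] {a b c : R} (hdet : a * c = b * b)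
    (h : SimplyExtendable !![a, b; b, c]) : ∃ e f : R, IsUnit (a * e ^ 2 - c * f ^ 2) := by
  obtain ⟨B, hB, hblock, hB22⟩ := h
  have hB_eq : B = !![a, b, B 0 2; b, c, B 1 2; B 2 0, B 2 1, 0] := by
    have h00 : B 0 0 = a := hblock 0 0
    have h01 : B 0 1 = b := hblock 0 1
    have h10 : B 1 0 = b := hblock 1 0
    have h11 : B 1 1 = c := hblock 1 1
    conv_lhs => rw [Matrix.eta_fin_three B]
    rw [h00, h01, h10, h11, hB22]
  rw [hB_eq, det_fin_three_zero_corner] at hB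
  refine ⟨B 2 1, B 2 0, .of_mul_eq_one (c * B 0 2 ^ 2 + a * B 1 2 ^ 2) ?_⟩
  simp only [CharTwo.sub_eq_add] at hB ⊢
  rw [← CharTwo.sq_add_eq_mul_of_mul_eq hdet, hB, one_pow]

end

theorem symmetric_pell_criterion_general (R : Type*) [CommRing R] (a b c : R)
    (hdet : a * c = b * b) :
    ((∃ e f : R, IsUnit (a * e ^ 2 - c * f ^ 2)) →
      SimplyExtendable (Matrix.of ![![a, b], ![b, c]])) ∧
    (CharP R 2 → SimplyExtendable (Matrix.of ![![a, b], ![b, c]]) →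
      ∃ e f : R, IsUnit (a * e ^ 2 - c * f ^ 2)) :=
  ⟨fun ⟨_, _, hunit⟩ => simplyExtendable_of_isUnit hunit,
    fun _ => exists_isUnit_of_simplyExtendable hdet⟩

/-- Pell-type criterion for a symmetric unimodular 2×2 matrix `[[a,b],[b,c]]` of
determinant 0: existence of `(e,f)` with `a*e² - c*f²` a unit implies simple
extendability, and the converse holds in characteristic 2. -/
theorem symmetric_pell_criterion (R : Type*) [CommRing R] (a b c : R)
    (hA : MatUnimodular (Matrix.of ![![a, b], ![b, c]])) (hdet : a * c = b * b) :
    ((∃ e f : R, IsUnit (a * e ^ 2 - c * f ^ 2)) →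
      SimplyExtendable (Matrix.of ![![a, b], ![b, c]])) ∧
    (CharP R 2 → SimplyExtendable (Matrix.of ![![a, b], ![b, c]]) →
      ∃ e f : R, IsUnit (a * e ^ 2 - c * f ^ 2)) :=
  symmetric_pell_criterion_general R a b c hdet
end
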